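/- arXiv:1703.02114 — 11 statements merged into one kernel-verified Lean document; each statement's English description precedes it below -/
import Mathlib

section
/- Let φ : R → S be a flat homomorphism of commutative rings such that either R is Noetherian or φ satisfies INC. Let p be a prime ideal of R such that the extension pS is a prime ideal of S. Then for every p-primary ideal I of R, the extension IS is a pS-primary ideal of S. -/
/-!
By flatness `(J : r)S = (JS : φ r)` for every ideal `J` and `r ∈ R`; for `J = I` and `r ∉ p` the
left side is `IS`, so the elements of `φ (R ∖ p)` are nonzerodivisors on `S ⧸ IS`. As `IS ⊆ pS`
and `pS = (√I)S ⊆ √(IS)`, we get `√(IS) = pS`, and it remains to show that every `t ∉ pS` is a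
nonzerodivisor on `S ⧸ IS`.

Under INC, suppose `st ∈ IS` with `s ∉ IS`, and let `P` be a minimal prime of `(IS : s)`. The
elements of `φ (R ∖ p)` are nonzerodivisors modulo `(IS : s)`, so none lies in `P`, i.e.
`P ∩ R ⊆ p`; but `P ⊇ √(IS) = pS`, so INC gives `P = pS`, which does not contain `t`.

For `R` Noetherian, `p ^ n ⊆ I` for some `n`. If `pb ⊆ c`, the exact sequence
`0 → R ⧸ (c : b) → R ⧸ c → R ⧸ (c + (b)) → 0` stays exact after `⊗ S`, and `t` is a
nonzerodivisor on `S ⧸ (c : b)S` once `R ∖ p` is inverted, because `(c : b) ⊇ p`. Adding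
generators of `p ^ k` one at a time and inducting on `k` shows that `t` is a nonzerodivisor on
`(S ⧸ cS)_p` whenever `p ^ k ⊆ c`; for `c = I` the localization can be undone.
-/

section OhmRushDefs

variable {R S : Type*} [CommRing R] [CommRing S]

/-- The Ohm–Rush content of an element `s` of an `R`-algebra `S` (given by a ring
homomorphism `f : R →+* S`): the intersection of all ideals `I` of `R` with `s ∈ IS`. -/
def ORContent (f : R →+* S) (s : S) : Ideal R :=
  sInf {I : Ideal R | s ∈ Ideal.map f I}

/-- `S` is an Ohm–Rush `R`-algebra if every `s ∈ S` lies in the extension of its content. -/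
def IsOhmRushAlgebra (f : R →+* S) : Prop :=
  ∀ s : S, s ∈ Ideal.map f (ORContent f s)

/-- Flatness of a ring homomorphism. -/
def RingHomFlat (f : R →+* S) : Prop :=
  letI := f.toAlgebra; Module.Flat R S

/-- Faithful flatness of a ring homomorphism. -/
def RingHomFaithfullyFlat (f : R →+* S) : Prop :=
  letI := f.toAlgebra; Module.FaithfullyFlat R S

/-- Module-freeness of a ring homomorphism. -/
def RingHomFree (f : R →+* S) : Prop :=
  letI := f.toAlgebra; Module.Free R S

/-- Weak content algebra: Ohm–Rush and `√c(fg) = √(c(f)c(g))`. -/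
def IsWeakContentAlgebra (f : R →+* S) : Prop :=
  IsOhmRushAlgebra f ∧ ∀ s t : S,
    (ORContent f (s * t)).radical = (ORContent f s * ORContent f t).radical

/-- Semicontent algebra: faithfully flat Ohm–Rush, and for every multiplicative subset `W`
of `R`, if `c(s)R_W = R_W` then `c(st)R_W = c(t)R_W`. -/
def IsSemicontentAlgebra (f : R →+* S) : Prop :=
  IsOhmRushAlgebra f ∧ RingHomFaithfullyFlat f ∧
    ∀ (W : Submonoid R) (s t : S),
      Ideal.map (algebraMap R (Localization W)) (ORContent f s) = ⊤ →
      Ideal.map (algebraMap R (Localization W)) (ORContent f (s * t)) =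
        Ideal.map (algebraMap R (Localization W)) (ORContent f t)

/-- Content algebra: faithfully flat Ohm–Rush satisfying the Dedekind–Mertens type formula. -/
def IsContentAlgebra (f : R →+* S) : Prop :=
  IsOhmRushAlgebra f ∧ RingHomFaithfullyFlat f ∧
    ∀ s t : S, ∃ n : ℕ, 0 < n ∧
      ORContent f s ^ n * ORContent f t = ORContent f s ^ (n - 1) * ORContent f (s * t)

/-- A ring homomorphism satisfies INC if comparable primes of `S` with the same
contraction to `R` are equal. -/
def SatisfiesINC (f : R →+* S) : Prop :=
  ∀ Q Q' : Ideal S, Q.IsPrime → Q'.IsPrime → Q ≤ Q' →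
    Ideal.comap f Q = Ideal.comap f Q' → Q = Q'

/-- A valuation domain: a domain whose divisibility is total. -/
def IsValuationDomain (A : Type*) [CommRing A] : Prop :=
  IsDomain A ∧ ∀ a b : A, ∃ c : A, a * c = b ∨ b * c = a

/-- A Prüfer domain: a domain whose localization at every maximal ideal is a
valuation domain. -/
def IsPruferDomain (A : Type*) [CommRing A] : Prop :=
  IsDomain A ∧ ∀ (P : Ideal A) (hP : P.IsMaximal),
    haveI := hP.isPrime
    IsValuationDomain (Localization.AtPrime P)

end OhmRushDefs

open Ideal Algebra.TensorProduct

theorem Ideal.mem_map_colon_of_mul_mem {R S : Type*} [CommRing R] [CommRing S] [Algebra R S]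
    [Module.Flat R S] (J : Ideal R) (r : R) {x : S}
    (hx : algebraMap R S r * x ∈ J.map (algebraMap R S)) :
    x ∈ (J.colon (span {r})).map (algebraMap R S) := by
  set C := J.colon (span {r})
  have hC : Submodule.comap (LinearMap.mulLeft R r) J = C := by
    ext a
    simp [C, mul_comm]
  let f : (R ⧸ C) →ₗ[R] R ⧸ J := Submodule.mapQ _ _ (LinearMap.mulLeft R r) hC.ge
  have hf : Function.Injective f := by
    rw [← LinearMap.ker_eq_bot, Submodule.ker_mapQ, hC, Submodule.mkQ_map_self]
  have hf1 : f 1 = Ideal.Quotient.mk J r := by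
    rw [← mul_one r]
    rfl
  have key : x ⊗ₜ[R] (1 : R ⧸ C) = 0 := by
    apply Module.Flat.lTensor_preserves_injective_linearMap f hf
    apply (quotIdealMapEquivTensorQuot S J).symm.injective
    rw [LinearMap.lTensor_tmul, hf1, quotIdealMapEquivTensorQuot_symm_tmul, map_zero, map_zero]
    exact (Submodule.Quotient.mk_eq_zero _).mpr (by rwa [Algebra.smul_def])
  rw [← Ideal.Quotient.eq_zero_iff_mem]
  apply (quotIdealMapEquivTensorQuot S C).injective
  simpa using key

section

variable {R S : Type*} [CommRing R] [CommRing S] {φ : R →+* S}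

theorem RingHomFlat.mem_map_colon_of_mul_mem (hφ : RingHomFlat φ) (J : Ideal R) {r : R} {x : S}
    (hx : φ r * x ∈ J.map φ) : x ∈ (J.colon (span {r})).map φ :=
  letI := φ.toAlgebra
  haveI : Module.Flat R S := hφ
  Ideal.mem_map_colon_of_mul_mem J r hx

theorem RingHomFlat.mem_map_of_mul_mem_of_isPrimary (hφ : RingHomFlat φ) {I : Ideal R}
    (hI : I.IsPrimary) {r : R} (hr : r ∉ I.radical) {x : S} (hx : φ r * x ∈ I.map φ) :
    x ∈ I.map φ := by
  refine map_mono (fun a ha ↦ ?_) (hφ.mem_map_colon_of_mul_mem I hx)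
  exact ((isPrimary_iff.mp hI).2 (mem_colon_span_singleton.mp ha)).resolve_right hr

theorem Ideal.radical_map_eq_map_of_isPrime {p I : Ideal R} (hpS : (p.map φ).IsPrime)
    (hIrad : I.radical = p) : (I.map φ).radical = p.map φ :=
  le_antisymm (hpS.radical_le_iff.mpr (map_mono (hIrad ▸ le_radical)))
    (hIrad ▸ map_radical_le φ)

theorem Ideal.comap_le_of_mem_minimalPrimes {p : Ideal R} {C P : Ideal S}
    (hC : ∀ r ∉ p, ∀ x, φ r * x ∈ C → x ∈ C) (hP : P ∈ C.minimalPrimes) : P.comap φ ≤ p := by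
  intro r hr
  by_contra hrp
  obtain ⟨y, hyC, hy⟩ := exists_mul_mem_of_mem_minimalPrimes hP hr
  exact hyC (hC r hrp y hy)

theorem mem_map_of_mul_mem_of_satisfiesINC (hφ : RingHomFlat φ) (hinc : SatisfiesINC φ)
    {p I : Ideal R} (hpS : (p.map φ).IsPrime) (hI : I.IsPrimary) (hIrad : I.radical = p)
    {s t : S} (hst : s * t ∈ I.map φ) (ht : t ∉ p.map φ) : s ∈ I.map φ := by
  by_contra hs
  set C := (I.map φ).colon (span {s})
  have hCtop : C ≠ ⊤ := by
    rwa [Ne, eq_top_iff_one, mem_colon_span_singleton, one_mul]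
  obtain ⟨P, hP⟩ := nonempty_minimalPrimes hCtop
  have hpSP : p.map φ ≤ P := by
    rw [← radical_map_eq_map_of_isPrime hpS hIrad, hP.1.1.radical_le_iff]
    exact le_trans (fun x hx ↦ mem_colon_span_singleton.mpr (mul_mem_right s _ hx)) hP.1.2
  have hPp : P.comap φ ≤ p := by
    refine comap_le_of_mem_minimalPrimes (fun r hr x hx ↦ ?_) hP
    refine mem_colon_span_singleton.mpr (hφ.mem_map_of_mul_mem_of_isPrimary hI (hIrad ▸ hr) ?_)
    simpa only [mul_assoc] using mem_colon_span_singleton.mp hx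
  have hPeq : p.map φ = P := hinc _ _ hpS hP.1.1 hpSP <|
    le_antisymm (comap_mono hpSP) (hPp.trans le_comap_map)
  exact ht (hPeq ▸ hP.1.2 (mem_colon_span_singleton.mpr (by rwa [mul_comm])))

/-- `t` is a nonzerodivisor on `S ⧸ cS` after inverting `φ (R ∖ p)`. -/
def IsRegularModMapAt (φ : R →+* S) (p : Ideal R) (t : S) (c : Ideal R) : Prop :=
  ∀ x : S, t * x ∈ c.map φ → ∃ r ∉ p, φ r * x ∈ c.map φ

section IsRegularModMapAt

variable {p : Ideal R} {t : S}

theorem isRegularModMapAt_of_le (hp : p.IsPrime) (hpS : (p.map φ).IsPrime) (ht : t ∉ p.map φ)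
    {c : Ideal R} (hc : p ≤ c) : IsRegularModMapAt φ p t c := by
  intro x hx
  by_cases hcp : c ≤ p
  · rw [le_antisymm hcp hc] at hx ⊢
    exact ⟨1, hp.one_notMem, by simpa using (hpS.mem_or_mem hx).resolve_left ht⟩
  · obtain ⟨r, hrc, hrp⟩ := SetLike.not_le_iff_exists.mp hcp
    exact ⟨r, hrp, mul_mem_right x _ (mem_map_of_mem φ hrc)⟩

theorem IsRegularModMapAt.of_sup_span_singleton (hφ : RingHomFlat φ) (hp : p.IsPrime)
    {c : Ideal R} {b : R} (hcolon : IsRegularModMapAt φ p t (c.colon (span {b})))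
    (hsup : IsRegularModMapAt φ p t (c ⊔ span {b})) : IsRegularModMapAt φ p t c := by
  intro x hx
  obtain ⟨r, hr, hrx⟩ := hsup x (map_mono le_sup_left hx)
  rw [Ideal.map_sup, map_span, Set.image_singleton, Submodule.mem_sup] at hrx
  obtain ⟨y, hy, _, hw, hyw⟩ := hrx
  obtain ⟨w, rfl⟩ := mem_span_singleton'.mp hw
  have htw : φ b * (t * w) ∈ c.map φ := by
    have : φ b * (t * w) = t * (φ r * x) - t * y := by rw [← hyw]; ring
    rw [this]
    exact sub_mem (by rw [mul_left_comm]; exact mul_mem_left _ _ hx) (mul_mem_left _ _ hy)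
  obtain ⟨r', hr', hr'w⟩ := hcolon w (hφ.mem_map_colon_of_mul_mem c htw)
  refine ⟨r' * r, fun h ↦ (hp.mem_or_mem h).elim hr' hr, ?_⟩
  have hbw : φ b * (φ r' * w) ∈ c.map φ := by
    have hle : span {b} * c.colon (span {b}) ≤ c :=
      span_singleton_mul_le_iff.mpr fun z hz ↦ by
        simpa [mul_comm] using mem_colon_span_singleton.mp hz
    refine map_mono hle ?_
    rw [Ideal.map_mul]
    exact mul_mem_mul (mem_map_of_mem φ (mem_span_singleton_self b)) hr'w
  have hrx : φ (r' * r) * x = φ r' * y + φ b * (φ r' * w) := by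
    rw [map_mul, mul_assoc, ← hyw]; ring
  rw [hrx]
  exact add_mem (mul_mem_left _ _ hy) hbw

theorem IsRegularModMapAt.of_sup_of_fg (hφ : RingHomFlat φ) (hp : p.IsPrime)
    (hpS : (p.map φ).IsPrime) (ht : t ∉ p.map φ) {N : Ideal R} (hN : N.FG) {c : Ideal R}
    (hpN : p * N ≤ c) (h : IsRegularModMapAt φ p t (c ⊔ N)) : IsRegularModMapAt φ p t c := by
  induction N, hN using Submodule.fg_induction generalizing c with
  | singleton b =>
    refine IsRegularModMapAt.of_sup_span_singleton hφ hp ?_ h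
    refine isRegularModMapAt_of_le hp hpS ht fun a ha ↦ mem_colon_span_singleton.mpr ?_
    exact hpN (mul_mem_mul ha (Submodule.mem_span_singleton_self b))
  | sup N₁ N₂ _ _ ih₁ ih₂ =>
    rw [Ideal.mul_sup, sup_le_iff] at hpN
    refine ih₁ hpN.1 (ih₂ (hpN.2.trans le_sup_left) ?_)
    rwa [sup_assoc]

theorem isRegularModMapAt_of_pow_le [IsNoetherianRing R] (hφ : RingHomFlat φ) (hp : p.IsPrime)
    (hpS : (p.map φ).IsPrime) (ht : t ∉ p.map φ) (n : ℕ) {c : Ideal R} (hc : p ^ n ≤ c) :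
    IsRegularModMapAt φ p t c := by
  induction n generalizing c with
  | zero => exact isRegularModMapAt_of_le hp hpS ht (le_top.trans (by simpa using hc))
  | succ n ih =>
    refine IsRegularModMapAt.of_sup_of_fg hφ hp hpS ht (IsNoetherian.noetherian _) ?_
      (ih le_sup_right)
    rwa [← pow_succ']

end IsRegularModMapAt

theorem mem_map_of_mul_mem_of_isNoetherianRing [IsNoetherianRing R] (hφ : RingHomFlat φ)
    {p I : Ideal R} (hpS : (p.map φ).IsPrime) (hI : I.IsPrimary) (hIrad : I.radical = p)
    {s t : S} (hst : s * t ∈ I.map φ) (ht : t ∉ p.map φ) : s ∈ I.map φ := by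
  have hp : p.IsPrime := hIrad ▸ isPrime_radical hI
  obtain ⟨n, hn⟩ := exists_radical_pow_le_of_fg I (IsNoetherian.noetherian _)
  obtain ⟨r, hr, hrs⟩ :=
    isRegularModMapAt_of_pow_le hφ hp hpS ht n (hIrad ▸ hn) s (by rwa [mul_comm])
  exact hφ.mem_map_of_mul_mem_of_isPrimary hI (hIrad ▸ hr) hrs

end

theorem primary_extends_to_primary_general {R S : Type*} [CommRing R] [CommRing S]
    (φ : R →+* S) (hflat : RingHomFlat φ)
    (hyp : IsNoetherianRing R ∨ SatisfiesINC φ)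
    (p : Ideal R) (hpS : (p.map φ).IsPrime)
    (I : Ideal R) (hI : I.IsPrimary) (hIrad : I.radical = p) :
    (I.map φ).IsPrimary ∧ (I.map φ).radical = p.map φ := by
  have hrad := radical_map_eq_map_of_isPrime hpS hIrad
  refine ⟨isPrimary_iff.mpr ⟨fun htop ↦ hpS.ne_top ?_, fun {s t} hst ↦ ?_⟩, hrad⟩
  · rw [← hrad, htop, radical_top]
  rw [hrad, or_iff_not_imp_right]
  intro ht
  rcases hyp with hN | hinc
  · exact mem_map_of_mul_mem_of_isNoetherianRing hflat hpS hI hIrad hst ht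
  · exact mem_map_of_mul_mem_of_satisfiesINC hflat hinc hpS hI hIrad hst ht

/-- If `φ : R → S` is flat and either `R` is Noetherian or `φ` satisfies
INC, and `p` is a prime of `R` with `pS` prime, then for every `p`-primary ideal `I` of
`R`, the extension `IS` is `pS`-primary. -/
theorem primary_extends_to_primary {R S : Type*} [CommRing R] [CommRing S]
    (φ : R →+* S) (hflat : RingHomFlat φ)
    (hyp : IsNoetherianRing R ∨ SatisfiesINC φ)
    (p : Ideal R) (hp : p.IsPrime) (hpS : (p.map φ).IsPrime)
    (I : Ideal R) (hI : I.IsPrimary) (hIrad : I.radical = p) :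
    (I.map φ).IsPrimary ∧ (I.map φ).radical = p.map φ :=
  primary_extends_to_primary_general φ hflat hyp p hpS I hI hIrad
end

section
/- Let R be a Noetherian commutative ring and S a faithfully flat Ohm-Rush R-algebra. Then S is a weak content R-algebra if and only if S is a semicontent R-algebra. -/
/-!
Localizing at a prime `P ⊇ c(st)` that contains neither `c(s)` nor `c(t)` would give
`R_P = c(t)R_P = c(st)R_P ⊆ PR_P`; so a semicontent algebra is weak content.

Conversely, a faithfully flat weak content algebra extends primes to primes. Given `W`, `s`, `t`
with `c(s)R_W = R_W`, it suffices to show `t ∈ JS` for the `W`-saturation `J` of `c(st)`, and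
we do so for every `W`-saturated `J` with `st ∈ JS` by Noetherian induction. For `J ≠ R` pick an
associated prime `p = (J : x)` of `R/J`; it misses `W`, so `s ∉ pS`. By induction some `w ∈ W`
has `wt ∈ (J + xR)S`, say `wt = u + xv` with `u ∈ JS`. Flatness gives `sv ∈ (J : x)S = pS`, so
`v ∈ pS` and `wt ∈ JS`; flatness again and saturation give `t ∈ JS`.
-/

open Ideal

section Localization

variable {R A : Type*} [CommRing R] [CommRing A] [Algebra R A] (W : Submonoid R)
  [IsLocalization W A]

include W in
theorem IsLocalization.under_colon_singleton_of_mem {w : R} (hw : w ∈ W) (K : Ideal A) :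
    (K.under R).colon {w} = K.under R := by
  ext y
  rw [Submodule.mem_colon_singleton, smul_eq_mul, mem_comap, mem_comap, map_mul, mul_comm,
    unit_mul_mem_iff_mem _ (IsLocalization.map_units A (⟨w, hw⟩ : W))]

theorem IsLocalization.exists_mem_le_colon_singleton_of_le_under {K L : Ideal R} (hK : K.FG)
    (h : K ≤ (L.map (algebraMap R A)).under R) : ∃ w ∈ W, K ≤ L.colon {w} := by
  obtain ⟨G, rfl⟩ := hK
  choose m hmW hmL using fun y : G =>
    (IsLocalization.algebraMap_mem_map_algebraMap_iff W A L y).1 (h (subset_span y.2))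
  refine ⟨∏ y, m y, prod_mem fun y _ => hmW y, span_le.2 fun y hy => ?_⟩
  obtain ⟨c, hc⟩ := Finset.dvd_prod_of_mem m (Finset.mem_univ ⟨y, hy⟩)
  rw [SetLike.mem_coe, Submodule.mem_colon_singleton, smul_eq_mul, hc, ← mul_assoc, mul_comm y]
  exact L.mul_mem_right c (hmL _)

end Localization

theorem Localization.AtPrime.map_algebraMap_eq_top_iff {R : Type*} [CommRing R] {P : Ideal R}
    [P.IsPrime] {I : Ideal R} :
    I.map (algebraMap R (Localization.AtPrime P)) = ⊤ ↔ ¬I ≤ P := by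
  rw [← not_iff_not, not_not, ← ne_eq,
    IsLocalization.map_algebraMap_ne_top_iff_disjoint P.primeCompl]
  exact Set.disjoint_compl_left_iff_subset

theorem Ideal.exists_notMem_isPrime_colon_singleton {R : Type*} [CommRing R] [IsNoetherianRing R]
    {J : Ideal R} (hJ : J ≠ ⊤) : ∃ x ∉ J, (J.colon {x}).IsPrime := by
  have : Nontrivial (R ⧸ J) := Quotient.nontrivial_iff.2 hJ
  obtain ⟨p, hp⟩ := associatedPrimes.nonempty R (R ⧸ J)
  obtain ⟨hpPrime, x, rfl⟩ := isAssociatedPrime_iff.1 hp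
  obtain ⟨y, rfl⟩ := Quotient.mk_surjective x
  have hcolon : (⊥ : Submodule R (R ⧸ J)).colon {Quotient.mk J y} = J.colon {y} := by
    ext r
    rw [Submodule.mem_colon_singleton, Submodule.mem_colon_singleton, Submodule.mem_bot,
      Algebra.smul_def, Quotient.algebraMap_eq, ← map_mul, Quotient.eq_zero_iff_mem, smul_eq_mul]
  rw [hcolon] at hpPrime
  exact ⟨y, fun hy => hpPrime.ne_top
    ((Submodule.colon_eq_top_iff_subset _).2 (Set.singleton_subset_iff.2 hy)), hpPrime⟩

section Flat

variable {R S : Type*} [CommRing R] [CommRing S] {f : R →+* S}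

theorem Ideal.map_colon_singleton_le (J : Ideal R) (x : R) :
    (J.colon {x}).map f ≤ (J.map f).colon {f x} :=
  map_le_iff_le_comap.2 fun r hr => by
    rw [mem_comap, Submodule.mem_colon_singleton, smul_eq_mul, ← map_mul]
    exact mem_map_of_mem f (Submodule.mem_colon_singleton.1 hr)

theorem RingHomFlat.map_colon_singleton (hfl : RingHomFlat f) (J : Ideal R) (x : R) :
    (J.colon {x}).map f = (J.map f).colon {f x} := by
  refine le_antisymm (J.map_colon_singleton_le x) fun v hv => ?_
  let := f.toAlgebra
  have : Module.Flat R S := hfl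
  set K := J.colon {x}
  let ψ : R →ₗ[R] R ⧸ J := J.mkQ ∘ₗ LinearMap.toSpanSingleton R R x
  have hker : LinearMap.ker ψ = K := by
    ext r
    simp only [ψ, K, LinearMap.mem_ker, LinearMap.comp_apply, LinearMap.toSpanSingleton_apply,
      Submodule.mkQ_apply, Submodule.Quotient.mk_eq_zero, Submodule.mem_colon_singleton]
  -- multiplication by `x` embeds `R ⧸ K` into `R ⧸ J`, and `S ⊗ -` keeps it injective
  let φ : R ⧸ K →ₗ[R] R ⧸ J := K.liftQ ψ hker.ge
  have hinj : Function.Injective (φ.lTensor S) :=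
    Module.Flat.lTensor_preserves_injective_linearMap φ
      (LinearMap.ker_eq_bot.1 (Submodule.ker_liftQ_eq_bot _ _ _ hker.le))
  have hv1 : v ⊗ₜ[R] (1 : R ⧸ K) = 0 := by
    apply hinj
    rw [LinearMap.lTensor_tmul, map_zero]
    apply (TensorProduct.tensorQuotEquivQuotSMul S J).injective
    have hφ : φ 1 = Ideal.Quotient.mk J x := (K.liftQ_apply ψ 1).trans (by simp [ψ])
    rw [hφ, TensorProduct.tensorQuotEquivQuotSMul_tmul_mk, map_zero,
      Submodule.Quotient.mk_eq_zero, smul_top_eq_map, Submodule.restrictScalars_mem,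
      Algebra.smul_def, mul_comm]
    exact Submodule.mem_colon_singleton.1 hv
  have := congrArg (TensorProduct.tensorQuotEquivQuotSMul S K) hv1
  rwa [← TensorProduct.tensorQuotEquivQuotSMul_symm_mk, LinearEquiv.apply_symm_apply, map_zero,
    Submodule.Quotient.mk_eq_zero, smul_top_eq_map, Submodule.restrictScalars_mem] at this

theorem RingHomFaithfullyFlat.flat (hff : RingHomFaithfullyFlat f) : RingHomFlat f :=
  letI := f.toAlgebra
  (hff : Module.FaithfullyFlat R S).toFlat

theorem RingHomFaithfullyFlat.map_ne_top (hff : RingHomFaithfullyFlat f) {I : Ideal R}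
    (hI : I ≠ ⊤) : I.map f ≠ ⊤ := by
  let := f.toAlgebra
  have : Module.FaithfullyFlat R S := hff
  intro h
  apply hI
  rw [← I.comap_map_eq_self_of_faithfullyFlat (B := S)]
  exact (congrArg (comap f) h).trans comap_top

theorem RingHomFlat.mem_map_of_mul_mem_map (hfl : RingHomFlat f) {J : Ideal R} {x : R}
    (hp : ((J.colon {x}).map f).IsPrime) {s t : S} (hs : s ∉ (J.colon {x}).map f)
    (hst : s * t ∈ J.map f) (ht : t ∈ (J ⊔ span {x}).map f) : t ∈ J.map f := by
  rw [Ideal.map_sup, map_span, Set.image_singleton] at ht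
  obtain ⟨u, hu, z, hz, rfl⟩ := Submodule.mem_sup.1 ht
  obtain ⟨v, rfl⟩ := mem_span_singleton'.1 hz
  have hsv : s * v ∈ (J.colon {x}).map f := by
    rw [hfl.map_colon_singleton, Submodule.mem_colon_singleton, smul_eq_mul]
    have := sub_mem hst (mul_mem_left _ s hu)
    rwa [mul_add, add_sub_cancel_left, ← mul_assoc] at this
  have hv : v ∈ (J.colon {x}).map f := (hp.mem_or_mem hsv).resolve_left hs
  exact add_mem hu (Submodule.mem_colon_singleton.1 (J.map_colon_singleton_le x hv))

end Flat

section OhmRush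

variable {R S : Type*} [CommRing R] [CommRing S] {f : R →+* S}

theorem ORContent_le_of_mem_map {s : S} {I : Ideal R} (h : s ∈ I.map f) : ORContent f s ≤ I :=
  sInf_le h

theorem IsOhmRushAlgebra.mem_map_iff (hor : IsOhmRushAlgebra f) {s : S} {I : Ideal R} :
    s ∈ I.map f ↔ ORContent f s ≤ I :=
  ⟨ORContent_le_of_mem_map, fun h => map_mono h (hor s)⟩

theorem IsOhmRushAlgebra.ORContent_mul_le_right (hor : IsOhmRushAlgebra f) (s t : S) :
    ORContent f (s * t) ≤ ORContent f t :=
  ORContent_le_of_mem_map (mul_mem_left _ s (hor t))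

theorem IsOhmRushAlgebra.ORContent_mul_le_mul (hor : IsOhmRushAlgebra f) (s t : S) :
    ORContent f (s * t) ≤ ORContent f s * ORContent f t :=
  ORContent_le_of_mem_map (by rw [Ideal.map_mul]; exact mul_mem_mul (hor s) (hor t))

theorem IsWeakContentAlgebra.isPrime_map (hwc : IsWeakContentAlgebra f)
    (hff : RingHomFaithfullyFlat f) {p : Ideal R} (hp : p.IsPrime) : (p.map f).IsPrime := by
  refine ⟨hff.map_ne_top hp.ne_top, fun {s t} hst => ?_⟩
  have hle : ORContent f s * ORContent f t ≤ p := by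
    rw [← hp.radical_le_iff, ← hwc.2, hp.radical_le_iff]
    exact ORContent_le_of_mem_map hst
  simp only [hwc.1.mem_map_iff]
  exact hp.mul_le.1 hle

theorem mem_map_under_of_mul_mem_map_under [IsNoetherianRing R] (hfl : RingHomFlat f)
    (hprime : ∀ p : Ideal R, p.IsPrime → (p.map f).IsPrime) (W : Submonoid R) {A : Type*}
    [CommRing A] [Algebra R A] [IsLocalization W A] {s t : S}
    (hs : (ORContent f s).map (algebraMap R A) = ⊤) (K : Ideal A)
    (hst : s * t ∈ (K.under R).map f) : t ∈ (K.under R).map f := by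
  have : IsNoetherianRing A := IsLocalization.isNoetherianRing W A inferInstance
  induction K using WellFoundedGT.induction with
  | ind K ih =>
  set J := K.under R
  by_cases hK : K = ⊤
  · simp only [J, hK, Ideal.under, comap_top, Ideal.map_top, Submodule.mem_top]
  have hsat : ∀ w ∈ W, J.colon {w} = J := fun w hw =>
    IsLocalization.under_colon_singleton_of_mem W hw K
  obtain ⟨x, hxJ, hp⟩ := exists_notMem_isPrime_colon_singleton (J := J) (comap_ne_top _ hK)
  have hdisj : Disjoint (W : Set R) (J.colon {x}) := by
    refine Set.disjoint_left.2 fun w hw hwx => hxJ ?_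
    rw [← hsat w hw, Submodule.mem_colon_singleton, smul_eq_mul, mul_comm]
    exact Submodule.mem_colon_singleton.1 hwx
  have hs' : s ∉ (J.colon {x}).map f := fun h =>
    (IsLocalization.map_algebraMap_ne_top_iff_disjoint W A _).2 hdisj
      (top_le_iff.1 (hs ▸ map_mono (ORContent_le_of_mem_map h)))
  set K' := K ⊔ span {algebraMap R A x}
  have hK' : K' = (J ⊔ span {x}).map (algebraMap R A) := by
    rw [Ideal.map_sup, IsLocalization.map_under W, map_span, Set.image_singleton]
  have hlt : K < K' := left_lt_sup.2 fun h => hxJ (h (mem_span_singleton_self _))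
  have htK' := ih K' hlt (map_mono (comap_mono le_sup_left) hst)
  obtain ⟨w, hw, hle⟩ := IsLocalization.exists_mem_le_colon_singleton_of_le_under W
    (IsNoetherian.noetherian (K'.under R)) (congrArg (under R) hK').le
  have htw : t * f w ∈ J.map f :=
    hfl.mem_map_of_mul_mem_map (hprime _ hp) hs' (mul_assoc s t _ ▸ mul_mem_right _ _ hst)
      (Submodule.mem_colon_singleton.1 (map_colon_singleton_le _ w (map_mono hle htK')))
  rwa [← hsat w hw, hfl.map_colon_singleton, Submodule.mem_colon_singleton]

theorem IsWeakContentAlgebra.isSemicontentAlgebra [IsNoetherianRing R]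
    (hwc : IsWeakContentAlgebra f) (hff : RingHomFaithfullyFlat f) : IsSemicontentAlgebra f := by
  refine ⟨hwc.1, hff, fun W s t hs =>
    le_antisymm (map_mono (hwc.1.ORContent_mul_le_right s t)) ?_⟩
  set K := (ORContent f (s * t)).map (algebraMap R (Localization W))
  have ht : t ∈ (K.under R).map f :=
    mem_map_under_of_mul_mem_map_under hff.flat (fun _ => hwc.isPrime_map hff) W hs K
      (map_mono le_comap_map (hwc.1 (s * t)))
  exact map_le_iff_le_comap.2 (hwc.1.mem_map_iff.1 ht)

theorem IsSemicontentAlgebra.isWeakContentAlgebra (hsc : IsSemicontentAlgebra f) :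
    IsWeakContentAlgebra f := by
  obtain ⟨hor, -, hloc⟩ := hsc
  refine ⟨hor, fun s t => le_antisymm (radical_mono (hor.ORContent_mul_le_mul s t)) ?_⟩
  rw [radical_le_radical_iff, radical_eq_sInf]
  refine le_sInf fun P ⟨hle, hP⟩ => hP.mul_le.2 ?_
  by_contra! h
  have hst := hloc P.primeCompl s t (Localization.AtPrime.map_algebraMap_eq_top_iff.2 h.1)
  rw [Localization.AtPrime.map_algebraMap_eq_top_iff.2 h.2,
    Localization.AtPrime.map_algebraMap_eq_top_iff] at hst
  exact hst hle

end OhmRush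

theorem weakContent_iff_semicontent_of_noetherian_general {R S : Type*} [CommRing R] [CommRing S]
    [IsNoetherianRing R] (f : R →+* S)
    (hff : RingHomFaithfullyFlat f) :
    IsWeakContentAlgebra f ↔ IsSemicontentAlgebra f :=
  ⟨fun hwc => hwc.isSemicontentAlgebra hff, IsSemicontentAlgebra.isWeakContentAlgebra⟩

/-- Over a Noetherian base ring, a faithfully flat Ohm–Rush algebra is
weak content iff it is semicontent. -/
theorem weakContent_iff_semicontent_of_noetherian {R S : Type*} [CommRing R] [CommRing S]
    [IsNoetherianRing R] (f : R →+* S)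
    (hff : RingHomFaithfullyFlat f) (hor : IsOhmRushAlgebra f) :
    IsWeakContentAlgebra f ↔ IsSemicontentAlgebra f :=
  weakContent_iff_semicontent_of_noetherian_general f hff
end

section
/- Let L/K be a purely transcendental field extension and let A be a nonzero commutative ring containing K (i.e., a nontrivial commutative K-algebra). Then A ⊗_K L is a content algebra over A. -/
namespace ORProof
open Polynomial Finset

variable {A : Type*} [CommRing A]

noncomputable def pc (f : A[X]) : Ideal A := Ideal.span (Set.range f.coeff)

lemma coeff_mem_pc (f : A[X]) (n : ℕ) : f.coeff n ∈ pc f := Ideal.subset_span ⟨n, rfl⟩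

lemma prod_mem_pow {ι : Type*} (s : Finset ι) (x : ι → A) (I : Ideal A)
    (h : ∀ i ∈ s, x i ∈ I) : ∏ i ∈ s, x i ∈ I ^ s.card := by
  simpa [Finset.prod_const] using Ideal.prod_mem_prod (I := fun _ => I) h

lemma strictMono_fin_le' {n : ℕ} {k : Fin n → ℕ} (hk : StrictMono k) :
    ∀ (j : ℕ) (h : j < n), j ≤ k ⟨j, h⟩ := by
  intro j
  induction j with
  | zero => intro _; exact Nat.zero_le _
  | succ p ih =>
    intro h
    have hp : p < n := Nat.lt_of_succ_lt h
    have h1 := hk (show (⟨p, hp⟩ : Fin n) < ⟨p + 1, h⟩ from by simp [Fin.lt_def])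
    have h2 := ih hp
    omega

lemma strictMono_fin_le {n : ℕ} {k : Fin n → ℕ} (hk : StrictMono k) (r : Fin n) :
    (r : ℕ) ≤ k r := by
  have := strictMono_fin_le' hk r.1 r.2
  simpa using this

lemma exists_strictMono_tuple {n : ℕ} (i : Fin n → ℕ) :
    ∃ (k : Fin n → ℕ) (e : Equiv.Perm (Fin n)), StrictMono k ∧ ∀ r, k r - (r : ℕ) = i (e r) := by
  refine ⟨fun r => i (Tuple.sort i r) + r, Tuple.sort i, ?_, fun r => by simp⟩
  intro r s hrs
  show i (Tuple.sort i r) + (r : ℕ) < i (Tuple.sort i s) + (s : ℕ)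
  have h1 : i (Tuple.sort i r) ≤ i (Tuple.sort i s) := Tuple.monotone_sort i hrs.le
  have h2 : (r : ℕ) < s := hrs
  omega

lemma perm_eq_one_of_strictMono {n : ℕ} (σ : Equiv.Perm (Fin n)) (h : StrictMono ⇑σ) :
    σ = 1 := by
  have hinv : StrictMono ⇑σ⁻¹ := by
    intro a b hab
    rcases lt_trichotomy (σ⁻¹ a) (σ⁻¹ b) with h' | h' | h'
    · exact h'
    · exact absurd (by simpa using congrArg σ h')
        hab.ne
    · exact absurd (by simpa using h h') (by simp [LE.le.not_gt hab.le])
  ext r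
  have h1 : (r : ℕ) ≤ σ r := strictMono_fin_le h r
  have h2 : ((σ r : Fin n) : ℕ) ≤ σ⁻¹ (σ r) := strictMono_fin_le hinv (σ r)
  rw [show σ⁻¹ (σ r) = r from Equiv.Perm.inv_eq_iff_eq.mpr rfl] at h2
  simp only [Equiv.Perm.coe_one, id_eq]
  exact Fin.ext (le_antisymm h2 h1) |>.symm ▸ rfl


open Finset in
lemma measure_lemma {n : ℕ} (k : Fin n → ℕ) (hk : StrictMono k) (σ : Equiv.Perm (Fin n))
    (hσ : σ ≠ 1) (hz : ∀ c : Fin n, (c : ℕ) ≤ k (σ c)) :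
    (∑ c, (k c - (c : ℕ)) ^ 2) < ∑ c, (k (σ c) - (c : ℕ)) ^ 2 := by
  have hle : ∀ c : Fin n, (c : ℕ) ≤ k c := strictMono_fin_le hk
  have key : (∑ c : Fin n, ((c : ℤ) * k (σ c))) < ∑ c : Fin n, ((c : ℤ) * k c) := by
    have hmono : MonovaryOn (fun c : Fin n => (c : ℤ)) (fun c : Fin n => (k c : ℤ))
        ↑(univ : Finset (Fin n)) := by
      intro i _ j _ hij
      show (i : ℤ) ≤ (j : ℤ)
      have h1 : (k i : ℤ) < (k j : ℤ) := hij
      have h2 : k i < k j := by exact_mod_cast h1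
      have h3 : i < j := hk.lt_iff_lt.mp h2
      have h4 : (i : ℕ) < (j : ℕ) := h3
      exact_mod_cast h4.le
    have h2 : {x | σ x ≠ x} ⊆ ↑(univ : Finset (Fin n)) := by intro x _; simp
    have h3 : ¬MonovaryOn (fun c : Fin n => (c : ℤ)) ((fun c : Fin n => (k c : ℤ)) ∘ ⇑σ)
        ↑(univ : Finset (Fin n)) := by
      intro hM
      apply hσ
      apply perm_eq_one_of_strictMono
      intro a b hab
      rcases lt_trichotomy (σ a) (σ b) with h' | h' | h'
      · exact h'
      · exact absurd (σ.injective h') hab.ne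
      · exfalso
        have hkk : (((fun c : Fin n => (k c : ℤ)) ∘ ⇑σ) b) < (((fun c : Fin n => (k c : ℤ)) ∘ ⇑σ) a) := by
          show (k (σ b) : ℤ) < (k (σ a) : ℤ)
          exact_mod_cast hk h'
        have hba := hM (by simp : b ∈ (↑(univ : Finset (Fin n)) : Set (Fin n))) (by simp : a ∈ (↑(univ : Finset (Fin n)) : Set (Fin n))) hkk
        have hba' : (b : ℤ) ≤ (a : ℤ) := hba
        have : (a : ℕ) < b := hab
        omega
    have := (hmono.sum_smul_comp_perm_lt_sum_smul_iff h2).2 h3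
    simpa [smul_eq_mul] using this
  have cast1 : ((∑ c, (k c - (c : ℕ)) ^ 2 : ℕ) : ℤ) = ∑ c : Fin n, ((k c : ℤ) - (c : ℕ)) ^ 2 := by
    push_cast
    refine Finset.sum_congr rfl fun c _ => ?_
    rw [Nat.cast_sub (hle c)]
  have cast2 : ((∑ c, (k (σ c) - (c : ℕ)) ^ 2 : ℕ) : ℤ) = ∑ c : Fin n, ((k (σ c) : ℤ) - (c : ℕ)) ^ 2 := by
    push_cast
    refine Finset.sum_congr rfl fun c _ => ?_
    rw [Nat.cast_sub (hz c)]
  have e1 : ∑ c : Fin n, ((k (σ c) : ℤ)) ^ 2 = ∑ c : Fin n, ((k c : ℤ)) ^ 2 :=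
    Equiv.sum_comp σ (fun c => ((k c : ℤ)) ^ 2)
  have expand1 : ∑ c : Fin n, ((k c : ℤ) - (c : ℕ)) ^ 2
      = (∑ c : Fin n, ((k c : ℤ)) ^ 2 + ∑ c : Fin n, ((c : ℤ)) ^ 2)
        - 2 * ∑ c : Fin n, ((c : ℤ) * k c) := by
    rw [Finset.mul_sum, ← Finset.sum_add_distrib, ← Finset.sum_sub_distrib]
    exact Finset.sum_congr rfl fun c _ => by ring
  have expand2 : ∑ c : Fin n, ((k (σ c) : ℤ) - (c : ℕ)) ^ 2
      = (∑ c : Fin n, ((k (σ c) : ℤ)) ^ 2 + ∑ c : Fin n, ((c : ℤ)) ^ 2)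
        - 2 * ∑ c : Fin n, ((c : ℤ) * k (σ c)) := by
    rw [Finset.mul_sum, ← Finset.sum_add_distrib, ← Finset.sum_sub_distrib]
    exact Finset.sum_congr rfl fun c _ => by ring
  have final : ((∑ c, (k c - (c : ℕ)) ^ 2 : ℕ) : ℤ) < ((∑ c, (k (σ c) - (c : ℕ)) ^ 2 : ℕ) : ℤ) := by
    rw [cast1, cast2, expand1, expand2, e1]
    omega
  exact_mod_cast final


open Polynomial Finset in
theorem key (f g : A[X]) :
    ∀ (s : ℕ) (k : Fin (g.natDegree + 1) → ℕ), StrictMono k →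
      (g.natDegree + 1) * (f.natDegree * f.natDegree) < (∑ r, (k r - (r : ℕ)) ^ 2) + s →
      ∀ j : ℕ, (∏ r, f.coeff (k r - (r : ℕ))) * g.coeff j
        ∈ pc f ^ g.natDegree * pc (f * g) := by
  intro s
  set m := g.natDegree with hm
  set d := f.natDegree with hd
  induction s with
  | zero =>
    intro k hk hlt j
    have hex : ∃ r, d * d < (k r - (r : ℕ)) ^ 2 := by
      by_contra hno
      push_neg at hno
      have hsum : ∑ r, (k r - (r : ℕ)) ^ 2 ≤ (m + 1) * (d * d) := by
        calc ∑ r, (k r - (r : ℕ)) ^ 2 ≤ (univ : Finset (Fin (m+1))).card • (d * d) :=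
              Finset.sum_le_card_nsmul _ _ _ (fun i _ => hno i)
        _ = (m + 1) * (d * d) := by simp [mul_comm]
      omega
    obtain ⟨r, hr⟩ := hex
    have hrd : d < k r - (r : ℕ) := by
      by_contra hle
      push_neg at hle
      have := Nat.pow_le_pow_left hle 2
      simp [pow_two] at this hr
      omega
    have h0 : f.coeff (k r - (r : ℕ)) = 0 := coeff_eq_zero_of_natDegree_lt hrd
    rw [Finset.prod_eq_zero (mem_univ r) h0, zero_mul]
    exact zero_mem _
  | succ s ih =>
    intro k hk hlt j
    by_cases hbig : ∃ r, d < k r - (r : ℕ)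
    · obtain ⟨r, hr⟩ := hbig
      have h0 : f.coeff (k r - (r : ℕ)) = 0 := coeff_eq_zero_of_natDegree_lt hr
      rw [Finset.prod_eq_zero (mem_univ r) h0, zero_mul]
      exact zero_mem _
    push_neg at hbig
    by_cases hj : m < j
    · have : g.coeff j = 0 := coeff_eq_zero_of_natDegree_lt hj
      rw [this, mul_zero]
      exact zero_mem _
    push_neg at hj
    set jf : Fin (m + 1) := ⟨j, Nat.lt_succ_of_le hj⟩ with hjf
    set M : Matrix (Fin (m + 1)) (Fin (m + 1)) A :=
      fun r c => if (c : ℕ) ≤ k r then f.coeff (k r - (c : ℕ)) else 0 with hMdef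
    set bv : Fin (m + 1) → A := fun c => g.coeff (c : ℕ) with hbvdef
    have hMmem : ∀ r c, M r c ∈ pc f := by
      intro r c
      rw [hMdef]
      dsimp only
      split
      · exact coeff_mem_pc f _
      · exact zero_mem _
    -- row identity
    have hrow : ∀ r, ∑ c, M r c * bv c = (f * g).coeff (k r) := by
      intro r
      have hcm : (f * g).coeff (k r)
          = ∑ q ∈ range (k r + 1), g.coeff q * f.coeff (k r - q) := by
        rw [mul_comm f g, Polynomial.coeff_mul]
        exact Finset.Nat.sum_antidiagonal_eq_sum_range_succ
          (fun a b => g.coeff a * f.coeff b) (k r)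
      set h : ℕ → A := fun c => (if c ≤ k r then f.coeff (k r - c) else 0) * g.coeff c with hh
      have e0 : ∑ c, M r c * bv c = ∑ c ∈ range (m + 1), h c := by
        rw [← Fin.sum_univ_eq_sum_range]
      set B : ℕ := max (m + 1) (k r + 1) with hB
      have e1 : ∑ c ∈ range (m + 1), h c = ∑ c ∈ range B, h c := by
        apply Finset.sum_subset (Finset.range_subset_range.2 (le_max_left _ _))
        intro x _ hx
        rw [Finset.mem_range, not_lt] at hx
        have : g.coeff x = 0 := coeff_eq_zero_of_natDegree_lt (by omega)
        simp [hh, this]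
      have e2 : ∑ c ∈ range (k r + 1), h c = ∑ c ∈ range B, h c := by
        apply Finset.sum_subset (Finset.range_subset_range.2 (le_max_right _ _))
        intro x _ hx
        rw [Finset.mem_range, not_lt] at hx
        have : ¬ (x ≤ k r) := by omega
        simp [hh, this]
      have e3 : ∑ c ∈ range (k r + 1), h c
          = ∑ q ∈ range (k r + 1), g.coeff q * f.coeff (k r - q) := by
        apply Finset.sum_congr rfl
        intro x hx
        rw [Finset.mem_range] at hx
        have hxle : x ≤ k r := by omega
        simp [hh, hxle, mul_comm]
      rw [e0, e1, ← e2, e3, hcm]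
    have hMb : M.mulVec bv = fun r => (f * g).coeff (k r) := by
      funext r
      simpa [Matrix.mulVec, dotProduct] using hrow r
    -- adjugate entries
    have hadj : ∀ p q, M.adjugate p q ∈ pc f ^ m := by
      intro p q
      rw [Matrix.adjugate_apply, Matrix.det_apply]
      refine sum_mem fun σ _ => ?_
      rw [Units.smul_def, zsmul_eq_mul]
      refine Ideal.mul_mem_left _ _ ?_
      set c₀ := σ⁻¹ q with hc₀
      have hq : σ c₀ = q := Equiv.apply_symm_apply σ q
      have hsplit : ∏ c, (M.updateRow q (Pi.single p 1)) (σ c) c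
          = (M.updateRow q (Pi.single p 1)) (σ c₀) c₀
            * ∏ c ∈ univ.erase c₀, (M.updateRow q (Pi.single p 1)) (σ c) c :=
        (Finset.mul_prod_erase univ _ (mem_univ c₀)).symm
      rw [hsplit]
      refine Ideal.mul_mem_left _ _ ?_
      have hprod : ∀ c ∈ univ.erase c₀, (M.updateRow q (Pi.single p 1)) (σ c) c ∈ pc f := by
        intro c hc
        have hne : σ c ≠ q := by
          intro h
          exact (mem_erase.1 hc).1 (by rw [← hq] at h; exact σ.injective h)
        rw [Matrix.updateRow_ne hne]
        exact hMmem _ _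
      have := prod_mem_pow (univ.erase c₀) _ (pc f) hprod
      rwa [Finset.card_erase_of_mem (mem_univ c₀), Finset.card_univ, Fintype.card_fin,
        Nat.add_sub_cancel] at this
    have hdet : M.det * bv jf ∈ pc f ^ m * pc (f * g) := by
      have h2 : M.det • bv = (M.adjugate).mulVec (fun r => (f * g).coeff (k r)) := by
        rw [← hMb, Matrix.mulVec_mulVec, Matrix.adjugate_mul, Matrix.smul_mulVec,
          Matrix.one_mulVec]
      have h3 : M.det * bv jf = ∑ c, M.adjugate jf c * (f * g).coeff (k c) := by
        have := congrFun h2 jf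
        simpa [Matrix.mulVec, dotProduct, Pi.smul_apply, smul_eq_mul] using this
      rw [h3]
      exact sum_mem fun c _ => Ideal.mul_mem_mul (hadj jf c) (coeff_mem_pc _ _)
    -- diagonal
    have hdiag : ∏ r, M r r = ∏ r, f.coeff (k r - (r : ℕ)) := by
      apply Finset.prod_congr rfl
      intro r _
      rw [hMdef]
      dsimp only
      rw [if_pos (strictMono_fin_le hk r)]
    -- expansion of determinant
    have hexpand : M.det = (∏ r, M r r)
        + ∑ σ ∈ (univ : Finset (Equiv.Perm (Fin (m + 1)))).erase 1,
            Equiv.Perm.sign σ • ∏ c, M (σ c) c := by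
      rw [Matrix.det_apply, ← Finset.add_sum_erase _ _ (mem_univ (1 : Equiv.Perm (Fin (m + 1))))]
      simp
    -- each non-identity term
    have hterm : ∀ σ ∈ (univ : Finset (Equiv.Perm (Fin (m + 1)))).erase 1,
        (Equiv.Perm.sign σ • ∏ c, M (σ c) c) * bv jf ∈ pc f ^ m * pc (f * g) := by
      intro σ hσ
      have hσ1 : σ ≠ 1 := (mem_erase.1 hσ).1
      rw [Units.smul_def, zsmul_eq_mul, mul_assoc]
      refine Ideal.mul_mem_left _ _ ?_
      by_cases hz : ∀ c : Fin (m + 1), (c : ℕ) ≤ k (σ c)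
      · have hMv : ∀ c, M (σ c) c = f.coeff (k (σ c) - (c : ℕ)) := by
          intro c
          rw [hMdef]
          dsimp only
          rw [if_pos (hz c)]
        set v : Fin (m + 1) → ℕ := fun c => k (σ c) - (c : ℕ) with hv
        obtain ⟨k', e, hk', hke⟩ := exists_strictMono_tuple v
        have hprod : ∏ r, f.coeff (k' r - (r : ℕ)) = ∏ c, M (σ c) c := by
          calc ∏ r, f.coeff (k' r - (r : ℕ)) = ∏ r, f.coeff (v (e r)) := by
                exact Finset.prod_congr rfl fun r _ => by rw [hke r]
          _ = ∏ c, f.coeff (v c) := Equiv.prod_comp e (fun c => f.coeff (v c))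
          _ = ∏ c, M (σ c) c := Finset.prod_congr rfl fun c _ => (hMv c).symm
        have hmeas2 : ∑ r, (k' r - (r : ℕ)) ^ 2 = ∑ c, (v c) ^ 2 := by
          calc ∑ r, (k' r - (r : ℕ)) ^ 2 = ∑ r, (v (e r)) ^ 2 :=
                Finset.sum_congr rfl fun r _ => by rw [hke r]
          _ = ∑ c, (v c) ^ 2 := Equiv.sum_comp e (fun c => (v c) ^ 2)
        have hstrict : (∑ c, (k c - (c : ℕ)) ^ 2) < ∑ c, (v c) ^ 2 :=
          measure_lemma k hk σ hσ1 hz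
        have happly := ih k' hk' (by omega) j
        rw [hprod] at happly
        exact happly
      · push_neg at hz
        obtain ⟨c, hc⟩ := hz
        have h0 : M (σ c) c = 0 := by
          rw [hMdef]
          dsimp only
          rw [if_neg (by omega)]
        rw [Finset.prod_eq_zero (f := fun c => M (σ c) c) (mem_univ c) h0, zero_mul]
        exact zero_mem _
    -- combine
    have hfinal : (∏ r, f.coeff (k r - (r : ℕ))) * g.coeff j
        = M.det * bv jf
          - (∑ σ ∈ (univ : Finset (Equiv.Perm (Fin (m + 1)))).erase 1,
              Equiv.Perm.sign σ • ∏ c, M (σ c) c) * bv jf := by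
      rw [hexpand, hdiag]
      have : bv jf = g.coeff j := by rw [hbvdef]
      rw [this]
      ring
    rw [hfinal]
    refine sub_mem hdet ?_
    rw [Finset.sum_mul]
    exact sum_mem hterm


open scoped Pointwise in
lemma span_set_pow (s : Set A) (n : ℕ) : Ideal.span s ^ n = Ideal.span (s ^ n) := by
  induction n with
  | zero => simp [Ideal.one_eq_top]
  | succ n ih => rw [pow_succ, pow_succ, ih, Ideal.span_mul_span']

open Polynomial Finset in
theorem key' (f g : A[X]) (i : Fin (g.natDegree + 1) → ℕ) (j : ℕ) :
    (∏ r, f.coeff (i r)) * g.coeff j ∈ pc f ^ g.natDegree * pc (f * g) := by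
  obtain ⟨k, e, hk, hke⟩ := exists_strictMono_tuple i
  have hp : ∏ r, f.coeff (k r - (r : ℕ)) = ∏ r, f.coeff (i r) := by
    calc ∏ r, f.coeff (k r - (r : ℕ)) = ∏ r, f.coeff (i (e r)) :=
          Finset.prod_congr rfl fun r _ => by rw [hke r]
    _ = ∏ r, f.coeff (i r) := Equiv.prod_comp e (fun r => f.coeff (i r))
  have := key f g ((g.natDegree + 1) * (f.natDegree * f.natDegree) + 1) k hk (by omega) j
  rwa [hp] at this

open Polynomial Finset Pointwise in
theorem dm_poly_le (f g : A[X]) :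
    pc f ^ (g.natDegree + 1) * pc g ≤ pc f ^ g.natDegree * pc (f * g) := by
  conv_lhs => rw [pc, pc, span_set_pow, Ideal.span_mul_span']
  rw [Ideal.span_le]
  rintro x ⟨u, hu, y, hy, rfl⟩
  obtain ⟨j, rfl⟩ := hy
  rw [Set.mem_pow] at hu
  obtain ⟨F, hF⟩ := hu
  have hFc : ∀ r : Fin (g.natDegree + 1), ∃ nr : ℕ, f.coeff nr = (F r : A) := fun r => (F r).2
  choose idx hidx using hFc
  have hu' : u = ∏ r, f.coeff (idx r) := by
    rw [← hF, List.prod_ofFn]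
    exact Finset.prod_congr rfl fun r _ => (hidx r).symm
  rw [SetLike.mem_coe, hu']
  exact key' f g idx j


open Polynomial Finset in
lemma pc_mul_le (f g : A[X]) : pc (f * g) ≤ pc f * pc g := by
  rw [pc, Ideal.span_le]
  rintro x ⟨n, rfl⟩
  rw [Polynomial.coeff_mul]
  exact sum_mem fun p _ => Ideal.mul_mem_mul (coeff_mem_pc f p.1) (coeff_mem_pc g p.2)

theorem dm_poly (f g : A[X]) :
    pc f ^ (g.natDegree + 1) * pc g = pc f ^ g.natDegree * pc (f * g) := by
  refine le_antisymm (dm_poly_le f g) ?_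
  calc pc f ^ g.natDegree * pc (f * g) ≤ pc f ^ g.natDegree * (pc f * pc g) :=
        Ideal.mul_mono_right (pc_mul_le f g)
  _ = pc f ^ (g.natDegree + 1) * pc g := by ring

/-! ### Multivariate content and Kronecker substitution -/

noncomputable def mvc {σ : Type*} (P : MvPolynomial σ A) : Ideal A :=
  Ideal.span (Set.range fun α => MvPolynomial.coeff α P)

lemma coeff_mem_mvc {σ : Type*} (P : MvPolynomial σ A) (α : σ →₀ ℕ) :
    MvPolynomial.coeff α P ∈ mvc P := Ideal.subset_span ⟨α, rfl⟩

open MvPolynomial Finset in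
lemma mvc_mul_le {σ : Type*} (F G : MvPolynomial σ A) : mvc (F * G) ≤ mvc F * mvc G := by
  classical
  rw [mvc, Ideal.span_le]
  rintro x ⟨α, rfl⟩
  show MvPolynomial.coeff α (F * G) ∈ mvc F * mvc G
  rw [MvPolynomial.coeff_mul]
  exact sum_mem fun p _ => Ideal.mul_mem_mul (coeff_mem_mvc F p.1) (coeff_mem_mvc G p.2)

open MvPolynomial Finset in
theorem mv_dm {σ : Type*} (F G : MvPolynomial σ A) :
    ∃ n : ℕ, 0 < n ∧ mvc F ^ n * mvc G = mvc F ^ (n - 1) * mvc (F * G) := by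
  classical
  -- the finite set of relevant variables
  set V : Finset σ := F.vars ∪ G.vars ∪ (F * G).vars with hV
  set kk : ℕ := V.card with hkk
  set ord : {x // x ∈ V} ≃ Fin kk := V.equivFin with hord
  set N : ℕ := F.totalDegree + G.totalDegree + 1 with hN
  have hN1 : 1 ≤ N := by omega
  set n₀ : σ → ℕ := fun t => if h : t ∈ V then N ^ ((ord ⟨t, h⟩ : Fin kk) : ℕ) else 0 with hn₀
  set κ : MvPolynomial σ A →ₐ[A] A[X] :=
    MvPolynomial.aeval (fun t => (Polynomial.X : A[X]) ^ n₀ t) with hκ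
  set D : (σ →₀ ℕ) → ℕ := fun α => α.sum fun t e => e * n₀ t with hD
  -- supports facts
  have hsupp : ∀ (P : MvPolynomial σ A), P.vars ⊆ V → P.totalDegree < N →
      (∀ α ∈ P.support, (↑α.support ⊆ (V : Set σ)) ∧ ∀ t, α t < N) := by
    intro P hPV hPd α hα
    constructor
    · intro t ht
      exact hPV (MvPolynomial.mem_vars t |>.2 ⟨α, hα, ht⟩)
    · intro t
      have h1 : α t ≤ α.sum fun _ e => e := by
        by_cases h : t ∈ α.support
        · rw [Finsupp.sum]
          exact Finset.single_le_sum (f := fun x => α x) (fun _ _ => Nat.zero_le _) h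
        · simp [Finsupp.notMem_support_iff.1 h]
      have h2 : (α.sum fun _ e => e) ≤ P.totalDegree := MvPolynomial.le_totalDegree hα
      omega
  -- D as a sum over Fin kk
  have hsum : ∀ (γ : σ →₀ ℕ), (↑γ.support ⊆ (V : Set σ)) →
      D γ = ∑ i : Fin kk, γ ((ord.symm i) : σ) * N ^ (i : ℕ) := by
    intro γ h1
    have h1' : γ.support ⊆ V := by exact_mod_cast h1
    rw [hD]
    dsimp only
    rw [Finsupp.sum_of_support_subset γ h1' _ (fun i _ => by simp)]
    rw [← Finset.sum_coe_sort V (fun t => γ t * n₀ t)]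
    rw [← Equiv.sum_comp ord.symm (fun x : {x // x ∈ V} => γ (x : σ) * n₀ (x : σ))]
    refine Finset.sum_congr rfl fun i _ => ?_
    have : n₀ ((ord.symm i : {x // x ∈ V}) : σ) = N ^ ((ord (ord.symm i)) : ℕ) := by
      rw [hn₀]
      dsimp only
      rw [dif_pos (ord.symm i).2]
    rw [this, Equiv.apply_symm_apply]
  -- injectivity of D on small supported monomials
  have hDinj : ∀ α β : σ →₀ ℕ, (↑α.support ⊆ (V : Set σ)) → (∀ t, α t < N) →
      (↑β.support ⊆ (V : Set σ)) → (∀ t, β t < N) → D α = D β → α = β := by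
    intro α β hαV hαN hβV hβN hDe
    have hα' := hsum α hαV
    have hβ' := hsum β hβV
    set fα : Fin kk → Fin N := fun i => ⟨α ((ord.symm i) : σ), hαN _⟩ with hfα
    set fβ : Fin kk → Fin N := fun i => ⟨β ((ord.symm i) : σ), hβN _⟩ with hfβ
    have eα : D α = ((finFunctionFinEquiv fα : Fin (N ^ kk)) : ℕ) := by
      rw [finFunctionFinEquiv_apply, hα']
    have eβ : D β = ((finFunctionFinEquiv fβ : Fin (N ^ kk)) : ℕ) := by
      rw [finFunctionFinEquiv_apply, hβ']
    have : fα = fβ := by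
      apply finFunctionFinEquiv.injective
      apply Fin.ext
      rw [← eα, ← eβ, hDe]
    have hV' : ∀ t ∈ V, α t = β t := by
      intro t ht
      have h2 : α ((ord.symm (ord ⟨t, ht⟩) : {x // x ∈ V}) : σ)
          = β ((ord.symm (ord ⟨t, ht⟩) : {x // x ∈ V}) : σ) :=
        congrArg Fin.val (congrFun this (ord ⟨t, ht⟩))
      rwa [Equiv.symm_apply_apply] at h2
    ext t
    by_cases ht : t ∈ V
    · exact hV' t ht
    · have h1 : α t = 0 := by
        by_contra h
        exact ht (hαV (by simpa [Finsupp.mem_support_iff] using h))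
      have h2 : β t = 0 := by
        by_contra h
        exact ht (hβV (by simpa [Finsupp.mem_support_iff] using h))
      rw [h1, h2]
  -- κ on monomials
  have hκmono : ∀ (α : σ →₀ ℕ) (a : A), κ (MvPolynomial.monomial α a)
      = Polynomial.monomial (D α) a := by
    intro α a
    rw [hκ, MvPolynomial.aeval_monomial]
    have : (α.prod fun t e => ((Polynomial.X : A[X]) ^ n₀ t) ^ e)
        = Polynomial.X ^ (D α) := by
      rw [Finsupp.prod, hD]
      dsimp only
      rw [Finsupp.sum, ← Finset.prod_pow_eq_pow_sum]
      exact Finset.prod_congr rfl fun t _ => by rw [← pow_mul, mul_comm]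
    rw [this, Polynomial.algebraMap_eq, Polynomial.C_mul_X_pow_eq_monomial]
  -- goodness
  set good : MvPolynomial σ A → Prop :=
    fun P => ∀ α ∈ P.support, (↑α.support ⊆ (V : Set σ)) ∧ ∀ t, α t < N with hgood
  have hgF : good F := hsupp F (by rw [hV]; intro t ht; simp [ht]) (by omega)
  have hgG : good G := hsupp G (by rw [hV]; intro t ht; simp [ht]) (by omega)
  have hgFG : good (F * G) := hsupp (F * G) (by rw [hV]; intro t ht; simp [ht])
    (by have := MvPolynomial.totalDegree_mul F G; omega)
  -- expansion of κ P
  have hκsum : ∀ P : MvPolynomial σ A,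
      κ P = ∑ α ∈ P.support, Polynomial.monomial (D α) (MvPolynomial.coeff α P) := by
    intro P
    conv_lhs => rw [MvPolynomial.as_sum P]
    rw [map_sum]
    exact Finset.sum_congr rfl fun α _ => hκmono α _
  have hcoeff : ∀ P : MvPolynomial σ A, ∀ nn : ℕ,
      (κ P).coeff nn = ∑ α ∈ P.support,
        (if D α = nn then MvPolynomial.coeff α P else 0) := by
    intro P nn
    rw [hκsum P, Polynomial.finset_sum_coeff]
    exact Finset.sum_congr rfl fun α _ => Polynomial.coeff_monomial
  -- content transfer
  have hpcmvc : ∀ P : MvPolynomial σ A, good P → pc (κ P) = mvc P := by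
    intro P hP
    apply le_antisymm
    · rw [pc, Ideal.span_le]
      rintro x ⟨nn, rfl⟩
      rw [hcoeff P nn]
      refine sum_mem fun α _ => ?_
      split
      · exact coeff_mem_mvc P α
      · exact zero_mem _
    · rw [mvc, Ideal.span_le]
      rintro x ⟨α₀, rfl⟩
      show MvPolynomial.coeff α₀ P ∈ pc (κ P)
      by_cases hα₀ : α₀ ∈ P.support
      · have : (κ P).coeff (D α₀) = MvPolynomial.coeff α₀ P := by
          rw [hcoeff P (D α₀)]
          rw [Finset.sum_eq_single α₀]
          · rw [if_pos rfl]
          · intro β hβ hne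
            rw [if_neg]
            intro hDe
            exact hne (hDinj β α₀ (hP β hβ).1 (hP β hβ).2 (hP α₀ hα₀).1 (hP α₀ hα₀).2 hDe)
          · intro h
            exact absurd hα₀ h
        rw [← this]
        exact coeff_mem_pc _ _
      · rw [MvPolynomial.notMem_support_iff.1 hα₀]
        exact zero_mem _
  -- conclude
  refine ⟨(κ G).natDegree + 1, Nat.succ_pos _, ?_⟩
  have h1 : mvc F ^ ((κ G).natDegree + 1) * mvc G
      = pc (κ F) ^ ((κ G).natDegree + 1) * pc (κ G) := by
    rw [hpcmvc F hgF, hpcmvc G hgG]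
  have h2 : pc (κ F) ^ ((κ G).natDegree + 1) * pc (κ G)
      = pc (κ F) ^ (κ G).natDegree * pc (κ F * κ G) := dm_poly (κ F) (κ G)
  have h3 : κ F * κ G = κ (F * G) := (map_mul κ F G).symm
  rw [h1, h2, h3, hpcmvc F hgF, hpcmvc (F * G) hgFG]
  simp


/-! ### Content in `A ⊗[K] L` -/

lemma orcontent_le {R S : Type*} [CommRing R] [CommRing S] (f : R →+* S) {x : S} {I : Ideal R}
    (h : x ∈ Ideal.map f I) : ORContent f x ≤ I := sInf_le h

lemma orcontent_unit_mul {R S : Type*} [CommRing R] [CommRing S] (f : R →+* S) {u : S}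
    (hu : IsUnit u) (x : S) : ORContent f (u * x) = ORContent f x := by
  unfold ORContent
  congr 1
  ext I
  simp only [Set.mem_setOf_eq]
  constructor
  · intro h
    have h2 := Ideal.mul_mem_left _ (↑hu.unit⁻¹) h
    rwa [← mul_assoc, IsUnit.val_inv_mul, one_mul] at h2
  · intro h
    exact Ideal.mul_mem_left _ u h

section Tensor

open scoped TensorProduct Classical
open Finset

variable {K L A : Type*} [Field K] [Field L] [Algebra K L] [CommRing A] [Algebra K A]

lemma exists_coord {ι : Type*} {v : ι → L} (hv : LinearIndependent K v) (i₀ : ι) :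
    ∃ φ : L →ₗ[K] K, ∀ i, φ (v i) = if i = i₀ then 1 else 0 := by
  have hs : LinearIndepOn K id (Set.range v) := hv.linearIndepOn_id
  let B := Module.Basis.extend hs
  have hmem : ∀ i : ι, v i ∈ hs.extend (Set.subset_univ _) := fun i =>
    hs.subset_extend _ ⟨i, rfl⟩
  refine ⟨B.coord ⟨v i₀, hmem i₀⟩, fun i => ?_⟩
  have hBi : B ⟨v i, hmem i⟩ = v i := Module.Basis.extend_apply_self hs _
  rw [Module.Basis.coord_apply, ← hBi, Module.Basis.repr_self, Finsupp.single_apply]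
  by_cases h : i = i₀
  · rw [if_pos h, if_pos (by rw [h])]
  · rw [if_neg h, if_neg]
    intro hc
    exact h (hv.injective (show v i = v i₀ from congrArg Subtype.val hc))

lemma coords_mem {ι : Type*} {v : ι → L} (hv : LinearIndependent K v) (s : Finset ι)
    (c : ι → A) (I : Ideal A)
    (h : (∑ i ∈ s, c i ⊗ₜ[K] v i) ∈ Ideal.map (algebraMap A (A ⊗[K] L)) I)
    {i₀ : ι} (hi₀ : i₀ ∈ s) : c i₀ ∈ I := by
  obtain ⟨φ, hφ⟩ := exists_coord hv i₀
  let ψ : A ⊗[K] L →ₗ[A] A :=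
    (Algebra.TensorProduct.rid K A A).toLinearMap ∘ₗ LinearMap.baseChange A φ
  have hψ : ∀ (a : A) (x : L), ψ (a ⊗ₜ[K] x) = φ x • a := by
    intro a x
    simp [ψ, LinearMap.baseChange_tmul, Algebra.TensorProduct.rid_tmul]
  have hmem : (∑ i ∈ s, c i ⊗ₜ[K] v i) ∈ I • (⊤ : Submodule A (A ⊗[K] L)) := by
    rw [Ideal.smul_top_eq_map]
    exact h
  have h2 : ψ (∑ i ∈ s, c i ⊗ₜ[K] v i) ∈ I := by
    have h3 : ψ (∑ i ∈ s, c i ⊗ₜ[K] v i) ∈ Submodule.map ψ (I • ⊤) :=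
      Submodule.mem_map_of_mem hmem
    rw [Submodule.map_smul''] at h3
    have h4 : I • Submodule.map ψ ⊤ ≤ I • (⊤ : Submodule A A) := smul_mono_right I le_top
    have h5 : I • (⊤ : Submodule A A) ≤ I := Submodule.smul_le.2 fun r hr n _ => by
      simpa [smul_eq_mul] using I.mul_mem_right n hr
    exact h5 (h4 h3)
  rw [map_sum] at h2
  have h6 : ∀ i ∈ s, ψ (c i ⊗ₜ[K] v i) = if i = i₀ then c i else 0 := by
    intro i _
    rw [hψ, hφ]
    split <;> simp
  rw [Finset.sum_congr rfl h6, Finset.sum_ite_eq' s i₀ c, if_pos hi₀] at h2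
  exact h2

lemma mem_map_span {ι : Type*} (v : ι → L) (s : Finset ι) (c : ι → A) :
    (∑ i ∈ s, c i ⊗ₜ[K] v i) ∈
      Ideal.map (algebraMap A (A ⊗[K] L)) (Ideal.span (c '' s)) := by
  refine sum_mem fun i hi => ?_
  have h1 : algebraMap A (A ⊗[K] L) (c i) ∈
      Ideal.map (algebraMap A (A ⊗[K] L)) (Ideal.span (c '' s)) :=
    Ideal.mem_map_of_mem _ (Ideal.subset_span ⟨i, hi, rfl⟩)
  have h2 : c i ⊗ₜ[K] v i = algebraMap A (A ⊗[K] L) (c i) * ((1 : A) ⊗ₜ[K] v i) := by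
    show c i ⊗ₜ[K] v i = (c i ⊗ₜ[K] 1) * ((1 : A) ⊗ₜ[K] v i)
    rw [Algebra.TensorProduct.tmul_mul_tmul, mul_one, one_mul]
  rw [h2]
  exact Ideal.mul_mem_right _ _ h1

lemma content_eq {ι : Type*} {v : ι → L} (hv : LinearIndependent K v) (s : Finset ι)
    (c : ι → A) :
    ORContent (algebraMap A (A ⊗[K] L)) (∑ i ∈ s, c i ⊗ₜ[K] v i) = Ideal.span (c '' s) := by
  apply le_antisymm
  · exact sInf_le (mem_map_span v s c)
  · refine le_sInf fun I hI => Ideal.span_le.2 ?_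
    rintro x ⟨i, hi, rfl⟩
    exact coords_mem hv s c I hI hi

set_option maxHeartbeats 1000000 in
lemma exists_rep (x : A ⊗[K] L) :
    ∃ (s : Finset ↥(Module.Basis.ofVectorSpaceIndex K L)) (c : ↥(Module.Basis.ofVectorSpaceIndex K L) → A),
      x = ∑ i ∈ s, c i ⊗ₜ[K] (Module.Basis.ofVectorSpace K L) i := by
  let BL := Module.Basis.ofVectorSpace K L
  let bS := Algebra.TensorProduct.basis A BL
  refine ⟨(bS.repr x).support, fun i => bS.repr x i, ?_⟩
  have h1 := bS.linearCombination_repr x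
  rw [Finsupp.linearCombination_apply, Finsupp.sum] at h1
  conv_lhs => rw [← h1]
  refine Finset.sum_congr rfl fun i _ => ?_
  rw [Algebra.TensorProduct.basis_apply, TensorProduct.smul_tmul', smul_eq_mul, mul_one]

lemma ohmRush_tensor : IsOhmRushAlgebra (algebraMap A (A ⊗[K] L)) := by
  intro x
  obtain ⟨s, c, rfl⟩ := exists_rep x
  rw [content_eq (Module.Basis.ofVectorSpace K L).linearIndependent s c]
  exact mem_map_span _ s c




lemma span_image_support {ι : Type*} (c : ι → A) (s : Finset ι) (h : ∀ i ∉ s, c i = 0) :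
    Ideal.span (c '' ↑s) = Ideal.span (Set.range c) := by
  apply le_antisymm
  · exact Ideal.span_mono (Set.image_subset_range _ _)
  · rw [Ideal.span_le]
    rintro x ⟨i, rfl⟩
    by_cases hi : i ∈ s
    · exact Ideal.subset_span ⟨i, hi, rfl⟩
    · rw [h i hi]
      exact zero_mem _

variable (T : Set L) (hT : AlgebraicIndependent K ((↑) : T → L))
  (hgen : IntermediateField.adjoin K T = ⊤)

noncomputable def mval (K : Type*) {L' : Type*} [Field K] [Field L'] [Algebra K L'] (T' : Set L') :
    (↑T' →₀ ℕ) → L' :=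
  fun α => MvPolynomial.aeval (Subtype.val : ↑T' → L') (MvPolynomial.monomial α (1 : K))

include hT in
lemma mval_li : LinearIndependent K (mval K T) := by
  have h1 := (MvPolynomial.basisMonomials ↑T K).linearIndependent
  have h2 := h1.map' (MvPolynomial.aeval (Subtype.val : ↑T → L)).toLinearMap
    (LinearMap.ker_eq_bot.2 hT)
  have h3 : (⇑(MvPolynomial.aeval (Subtype.val : ↑T → L)).toLinearMap
      ∘ ⇑(MvPolynomial.basisMonomials ↑T K)) = mval K T := by
    funext α
    simp only [MvPolynomial.coe_basisMonomials, Function.comp_apply, AlgHom.toLinearMap_apply, mval]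
  rwa [h3] at h2

noncomputable def evA : MvPolynomial ↑T A →ₐ[A] A ⊗[K] L :=
  MvPolynomial.aeval (fun t : ↑T => (1 : A) ⊗ₜ[K] (t : L))

lemma evA_map (R : MvPolynomial ↑T K) :
    evA T (MvPolynomial.map (algebraMap K A) R)
      = (1 : A) ⊗ₜ[K] (MvPolynomial.aeval (Subtype.val : ↑T → L) R) := by
  rw [evA, MvPolynomial.aeval_map_algebraMap]
  have h := MvPolynomial.comp_aeval (Subtype.val : ↑T → L)
    (Algebra.TensorProduct.includeRight : L →ₐ[K] A ⊗[K] L)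
  have h2 := DFunLike.congr_fun h R
  simp only [AlgHom.coe_comp, Function.comp_apply, Algebra.TensorProduct.includeRight_apply] at h2
  exact h2.symm

lemma evA_monomial (α : ↑T →₀ ℕ) (a : A) :
    evA T (MvPolynomial.monomial α a) = a ⊗ₜ[K] mval K T α := by
  rw [evA, MvPolynomial.aeval_monomial]
  have h1 : (α.prod fun t e => ((1 : A) ⊗ₜ[K] (t : L)) ^ e)
      = (1 : A) ⊗ₜ[K] (α.prod fun t e => (t : L) ^ e) := by
    rw [show (α.prod fun t e => ((1 : A) ⊗ₜ[K] (t : L)) ^ e)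
        = α.prod fun t e => Algebra.TensorProduct.includeRight ((t : L) ^ e) from
      Finsupp.prod_congr fun t _ => by
        rw [Algebra.TensorProduct.includeRight_apply, Algebra.TensorProduct.tmul_pow, one_pow]]
    rw [← map_finsuppProd, Algebra.TensorProduct.includeRight_apply]
  rw [h1]
  have h2 : mval K T α = α.prod fun t e => (t : L) ^ e := by
    rw [mval, MvPolynomial.aeval_monomial, map_one, one_mul]
  rw [h2]
  show (a ⊗ₜ[K] 1) * ((1 : A) ⊗ₜ[K] _) = _
  rw [Algebra.TensorProduct.tmul_mul_tmul, mul_one, one_mul]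

lemma evA_sum (P : MvPolynomial ↑T A) :
    evA T P = ∑ α ∈ P.support, (MvPolynomial.coeff α P) ⊗ₜ[K] mval K T α := by
  conv_lhs => rw [MvPolynomial.as_sum P]
  rw [map_sum]
  exact Finset.sum_congr rfl fun α _ => evA_monomial T α _

include hT in
lemma content_evA (P : MvPolynomial ↑T A) :
    ORContent (algebraMap A (A ⊗[K] L)) (evA T P) = mvc P := by
  rw [evA_sum, content_eq (mval_li T hT) P.support (fun α => MvPolynomial.coeff α P)]
  rw [mvc]
  exact span_image_support _ _ fun α hα => MvPolynomial.notMem_support_iff.1 hα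

include hgen in
lemma exists_denom (l : L) : ∃ Q R : MvPolynomial ↑T K,
    MvPolynomial.aeval (Subtype.val : ↑T → L) Q ≠ 0 ∧
      l * MvPolynomial.aeval (Subtype.val : ↑T → L) Q
        = MvPolynomial.aeval (Subtype.val : ↑T → L) R := by
  have hl : l ∈ IntermediateField.adjoin K T := by rw [hgen]; trivial
  rw [IntermediateField.mem_adjoin_iff] at hl
  obtain ⟨r, s, hrs⟩ := hl
  by_cases hs : MvPolynomial.aeval (Subtype.val : ↑T → L) s = 0
  · refine ⟨1, 0, by simp, ?_⟩
    rw [hrs, hs, div_zero]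
    simp
  · exact ⟨s, r, hs, by rw [hrs, div_mul_cancel₀ _ hs]⟩

include hgen in
lemma exists_poly (x : A ⊗[K] L) : ∃ (Q : MvPolynomial ↑T K) (P : MvPolynomial ↑T A),
    MvPolynomial.aeval (Subtype.val : ↑T → L) Q ≠ 0 ∧
      ((1 : A) ⊗ₜ[K] (MvPolynomial.aeval (Subtype.val : ↑T → L) Q)) * x = evA T P := by
  obtain ⟨sf, hx⟩ := TensorProduct.exists_finset x
  have hd := fun l : L => exists_denom T hgen l
  choose Qf Rf hQ hQR using hd
  refine ⟨∏ p ∈ sf, Qf p.2,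
    ∑ p ∈ sf, MvPolynomial.C p.1
      * MvPolynomial.map (algebraMap K A) (Rf p.2 * ∏ q ∈ sf.erase p, Qf q.2), ?_, ?_⟩
  · rw [map_prod]
    exact Finset.prod_ne_zero_iff.2 fun p _ => hQ p.2
  · rw [hx, Finset.mul_sum, map_sum]
    refine Finset.sum_congr rfl fun p hp => ?_
    rw [map_mul, evA_map]
    have h1 : evA T (MvPolynomial.C p.1) = p.1 ⊗ₜ[K] 1 := by
      rw [evA]
      simp [Algebra.TensorProduct.algebraMap_apply]
    have h2 : MvPolynomial.aeval (Subtype.val : ↑T → L) (∏ q ∈ sf, Qf q.2)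
        = MvPolynomial.aeval (Subtype.val : ↑T → L) (Qf p.2)
          * ∏ q ∈ sf.erase p, MvPolynomial.aeval (Subtype.val : ↑T → L) (Qf q.2) := by
      rw [map_prod, ← Finset.mul_prod_erase sf _ hp]
    have h3 : MvPolynomial.aeval (Subtype.val : ↑T → L) (∏ q ∈ sf, Qf q.2) * p.2
        = MvPolynomial.aeval (Subtype.val : ↑T → L) (Rf p.2 * ∏ q ∈ sf.erase p, Qf q.2) := by
      rw [map_mul, map_prod, map_prod,
        ← Finset.mul_prod_erase sf (fun q => MvPolynomial.aeval (Subtype.val : ↑T → L) (Qf q.2)) hp,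
        mul_right_comm, mul_comm (MvPolynomial.aeval (Subtype.val : ↑T → L) (Qf p.2)) p.2, hQR]
    rw [h1, Algebra.TensorProduct.tmul_mul_tmul, Algebra.TensorProduct.tmul_mul_tmul,
      one_mul, mul_one, one_mul, h3]

include hT hgen in
theorem main_dm (f g : A ⊗[K] L) :
    ∃ n : ℕ, 0 < n ∧
      ORContent (algebraMap A (A ⊗[K] L)) f ^ n * ORContent (algebraMap A (A ⊗[K] L)) g
        = ORContent (algebraMap A (A ⊗[K] L)) f ^ (n - 1)
          * ORContent (algebraMap A (A ⊗[K] L)) (f * g) := by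
  obtain ⟨Q₁, P₁, hQ₁, hf⟩ := exists_poly T hgen f
  obtain ⟨Q₂, P₂, hQ₂, hg⟩ := exists_poly T hgen g
  set u₁ : A ⊗[K] L := (1 : A) ⊗ₜ[K] (MvPolynomial.aeval (Subtype.val : ↑T → L) Q₁) with hu₁
  set u₂ : A ⊗[K] L := (1 : A) ⊗ₜ[K] (MvPolynomial.aeval (Subtype.val : ↑T → L) Q₂) with hu₂
  have hunit : ∀ (z : L), z ≠ 0 → IsUnit ((1 : A) ⊗ₜ[K] z) := by
    intro z hz
    refine isUnit_iff_exists.2 ⟨(1 : A) ⊗ₜ[K] z⁻¹, ?_, ?_⟩ <;>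
      rw [Algebra.TensorProduct.tmul_mul_tmul, one_mul] <;> simp [hz, ← Algebra.TensorProduct.one_def]
  have hu₁u : IsUnit u₁ := hunit _ hQ₁
  have hu₂u : IsUnit u₂ := hunit _ hQ₂
  set F : MvPolynomial ↑T A := MvPolynomial.map (algebraMap K A) Q₂ * P₁ with hF
  set G : MvPolynomial ↑T A := MvPolynomial.map (algebraMap K A) Q₁ * P₂ with hG
  have hevF : evA T F = (u₂ * u₁) * f := by
    rw [hF, map_mul, evA_map, ← hu₂, mul_assoc, hf]
  have hevG : evA T G = (u₁ * u₂) * g := by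
    rw [hG, map_mul, evA_map, ← hu₁, mul_assoc, hg]
  have hcf : ORContent (algebraMap A (A ⊗[K] L)) f = mvc F := by
    rw [← content_evA T hT F, hevF, orcontent_unit_mul _ (hu₂u.mul hu₁u)]
  have hcg : ORContent (algebraMap A (A ⊗[K] L)) g = mvc G := by
    rw [← content_evA T hT G, hevG, orcontent_unit_mul _ (hu₁u.mul hu₂u)]
  have hcfg : ORContent (algebraMap A (A ⊗[K] L)) (f * g) = mvc (F * G) := by
    rw [← content_evA T hT (F * G), map_mul, hevF, hevG]
    have : (u₂ * u₁) * f * ((u₁ * u₂) * g) = ((u₂ * u₁) * (u₁ * u₂)) * (f * g) := by ring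
    rw [this, orcontent_unit_mul _ ((hu₂u.mul hu₁u).mul (hu₁u.mul hu₂u))]
  obtain ⟨n, hn, hdm⟩ := mv_dm F G
  exact ⟨n, hn, by rw [hcf, hcg, hcfg, hdm]⟩

end Tensor

end ORProof

open scoped TensorProduct in
/-- If `L/K` is purely transcendental and `A` is a nontrivial commutative
`K`-algebra, then `A ⊗[K] L` is a content algebra over `A`. -/
theorem tensorProduct_contentAlgebra_of_purelyTranscendental {K L A : Type*}
    [Field K] [Field L] [Algebra K L] [CommRing A] [Nontrivial A] [Algebra K A]
    (T : Set L) (hT : AlgebraicIndependent K ((↑) : T → L))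
    (hgen : IntermediateField.adjoin K T = ⊤) :
    IsContentAlgebra (Algebra.TensorProduct.includeLeftRingHom : A →+* A ⊗[K] L) := by
  have hcoe : (Algebra.TensorProduct.includeLeftRingHom : A →+* A ⊗[K] L)
      = algebraMap A (A ⊗[K] L) := rfl
  refine ⟨?_, ?_, ?_⟩
  · rw [hcoe]
    exact ORProof.ohmRush_tensor
  · have halg : (Algebra.TensorProduct.includeLeftRingHom : A →+* A ⊗[K] L).toAlgebra
        = (inferInstance : Algebra A (A ⊗[K] L)) :=
      Algebra.algebra_ext _ _ fun r => rfl
    delta RingHomFaithfullyFlat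
    rw [halg]
    infer_instance
  · intro s t
    rw [hcoe]
    exact ORProof.main_dm T hT hgen s t
end

section
/- Let R ⊆ S be an extension of commutative rings satisfying INC, and suppose that for every prime ideal p of R, either pS = S or pS is a prime ideal of S. Then the induced map Spec S → Spec R is injective; more precisely, every prime ideal P of S satisfies P = (P ∩ R)S. -/
section INC

variable {R S : Type*} [CommRing R] [CommRing S] {f : R →+* S}

/-- `(P ∩ R)S ⊆ P` are primes lying over the same prime `P ∩ R`, so INC forces equality. -/
theorem SatisfiesINC.eq_map_comap (hinc : SatisfiesINC f) {P : Ideal S} (hP : P.IsPrime)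
    (hprime : ((P.comap f).map f).IsPrime) : P = (P.comap f).map f :=
  (hinc _ _ hprime hP Ideal.map_comap_le (Ideal.comap_map_comap f P)).symm

theorem Ideal.map_comap_ne_top {P : Ideal S} (hP : P ≠ ⊤) : (P.comap f).map f ≠ ⊤ :=
  fun htop => hP (top_le_iff.mp (htop ▸ Ideal.map_comap_le))

theorem PrimeSpectrum.comap_injective_of_eq_map_comap
    (h : ∀ P : Ideal S, P.IsPrime → P = (P.comap f).map f) :
    Function.Injective (PrimeSpectrum.comap f) := by
  intro P Q hPQ
  ext1
  have hcomap : P.asIdeal.comap f = Q.asIdeal.comap f := congrArg PrimeSpectrum.asIdeal hPQ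
  rw [h P.asIdeal P.isPrime, h Q.asIdeal Q.isPrime, hcomap]

end INC

theorem spec_injective_of_inc_general {R S : Type*} [CommRing R] [CommRing S]
    (f : R →+* S) (hinc : SatisfiesINC f)
    (hext : ∀ p : Ideal R, p.IsPrime → p.map f = ⊤ ∨ (p.map f).IsPrime) :
    Function.Injective (PrimeSpectrum.comap f) ∧
      ∀ P : Ideal S, P.IsPrime → P = (P.comap f).map f := by
  have hextended : ∀ P : Ideal S, P.IsPrime → P = (P.comap f).map f := fun P hP =>
    hinc.eq_map_comap hP ((hext _ (hP.comap f)).resolve_left (Ideal.map_comap_ne_top hP.ne_top))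
  exact ⟨PrimeSpectrum.comap_injective_of_eq_map_comap hextended, hextended⟩

/-- If `R ⊆ S` satisfies INC and primes of `R` extend to primes of `S`
(or to the unit ideal), then `Spec S → Spec R` is injective, and every prime `P` of `S`
is extended: `P = (P ∩ R)S`. -/
theorem spec_injective_of_inc {R S : Type*} [CommRing R] [CommRing S]
    (f : R →+* S) (hinj : Function.Injective f) (hinc : SatisfiesINC f)
    (hext : ∀ p : Ideal R, p.IsPrime → p.map f = ⊤ ∨ (p.map f).IsPrime) :
    Function.Injective (PrimeSpectrum.comap f) ∧
      ∀ P : Ideal S, P.IsPrime → P = (P.comap f).map f :=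
  spec_injective_of_inc_general f hinc hext
end

section
/- Let R be an Artinian commutative ring and M a flat R-module. Then M is an Ohm-Rush R-module; that is, for every x ∈ M, one has x ∈ c(x)M, where c(x) denotes the intersection of all ideals I of R with x ∈ IM. -/
/-!
Over a flat module, `(I ⊓ J) M = I M ⊓ J M` (tensor `M` with the injection
`R/(I ⊓ J) → R/I × R/J` and use `M ⊗ R/I ≅ M/IM`). So the ideals `I` with `x ∈ I M` form a
nonempty family closed under `⊓`; over an Artinian ring such a family has a minimal member, which
is then its least member, i.e. the content of `x`.
-/

open TensorProduct

theorem InfClosed.sInf_mem_of_wellFoundedLT {α : Type*} [CompleteLattice α] [WellFoundedLT α]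
    {s : Set α} (hs : InfClosed s) (hne : s.Nonempty) : sInf s ∈ s := by
  obtain ⟨a, ha⟩ := exists_minimal_of_wellFoundedLT (· ∈ s) hne
  have hleast : IsLeast s a :=
    ⟨ha.prop, fun b hb ↦ (ha.le_of_le (hs hb ha.prop) inf_le_right).trans inf_le_left⟩
  exact (isGLB_iff_sInf_eq.1 hleast.isGLB).symm ▸ ha.prop

theorem tmul_one_eq_zero_iff_mem_smul_top {R M : Type*} [CommRing R] [AddCommGroup M] [Module R M]
    (I : Ideal R) (x : M) :
    x ⊗ₜ[R] (1 : R ⧸ I) = 0 ↔ x ∈ I • (⊤ : Submodule R M) := by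
  rw [← map_one (Ideal.Quotient.mk I), ← (tensorQuotEquivQuotSMul M I).map_eq_zero_iff,
    tensorQuotEquivQuotSMul_tmul_mk, one_smul, Submodule.Quotient.mk_eq_zero]

theorem Module.Flat.inf_smul_top {R M : Type*} [CommRing R] [AddCommGroup M] [Module R M]
    [Module.Flat R M] (I J : Ideal R) :
    (I ⊓ J) • (⊤ : Submodule R M) = I • ⊤ ⊓ J • ⊤ := by
  refine le_antisymm (le_inf (Submodule.smul_mono_left inf_le_left)
    (Submodule.smul_mono_left inf_le_right)) ?_
  intro x hx
  obtain ⟨hI, hJ⟩ := Submodule.mem_inf.1 hx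
  let f : R ⧸ (I ⊓ J) →ₗ[R] (R ⧸ I) × (R ⧸ J) :=
    Submodule.liftQ _ (I.mkQ.prod J.mkQ) (by simp [LinearMap.ker_prod])
  have hf : Function.Injective f := by
    rw [← LinearMap.ker_eq_bot, Submodule.ker_liftQ_eq_bot']
    simp [LinearMap.ker_prod]
  rw [← tmul_one_eq_zero_iff_mem_smul_top] at hI hJ ⊢
  apply (TensorProduct.prodRight R R M _ _).injective.comp
    (Module.Flat.lTensor_preserves_injective_linearMap f hf)
  have hf1 : f 1 = (1, 1) := rfl
  simp [hf1, hI, hJ]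

/-- A flat module over an Artinian commutative ring is Ohm–Rush. -/
theorem flat_module_ohmRush_of_artinian {R M : Type*} [CommRing R] [IsArtinianRing R]
    [AddCommGroup M] [Module R M] [Module.Flat R M] (x : M) :
    x ∈ (sInf {I : Ideal R | x ∈ I • (⊤ : Submodule R M)}) • (⊤ : Submodule R M) := by
  have hclosed : InfClosed {I : Ideal R | x ∈ I • (⊤ : Submodule R M)} := fun I hI J hJ ↦ by
    rw [Set.mem_ofPred_eq, Module.Flat.inf_smul_top]
    exact ⟨hI, hJ⟩
  exact hclosed.sInf_mem_of_wellFoundedLT ⟨⊤, by simp⟩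
end

section
/- Let R ⊆ S be an extension of commutative rings with R Artinian. The following are equivalent: (1) S is a content R-algebra; (2) S is a semicontent R-algebra; (3) S is faithfully flat over R and is a weak content R-algebra; (4) S is flat over R and pS is a prime ideal of S for every prime ideal p of R. -/
set_option maxHeartbeats 2000000


section FlatRelationAux

open TensorProduct LinearMap in
private lemma flat_relation {R : Type*} {M : Type*} [CommRing R] [AddCommGroup M]
    [Module R M] [Module.Flat R M] {n : ℕ} (r : Fin n → R) (x : Fin n → M)
    (h : ∑ i, r i • x i = 0) :
    ∃ (N : ℕ) (a : Fin N → Fin n → R) (y : Fin N → M),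
      (∀ j, ∑ i, r i * a j i = 0) ∧ (∀ i, x i = ∑ j, a j i • y j) := by
  classical
  set φ : (Fin n →₀ R) →ₗ[R] R := Finsupp.linearCombination R r with hφdef
  set ξ : (Fin n →₀ R) ⊗[R] M := ∑ i, Finsupp.single i 1 ⊗ₜ[R] x i with hξdef
  have hφξ : φ.rTensor M ξ = 0 := by
    have h1 : (TensorProduct.lid R M) (φ.rTensor M ξ) = 0 := by
      rw [hξdef, map_sum, map_sum]
      simpa [hφdef, Finsupp.linearCombination_single] using h
    simpa using (LinearEquiv.map_eq_zero_iff _).mp h1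
  have hinj : Function.Injective (((LinearMap.range φ).subtype).rTensor M) :=
    Module.Flat.rTensor_preserves_injective_linearMap _ (Submodule.injective_subtype _)
  have hcomp : φ = (LinearMap.range φ).subtype ∘ₗ φ.rangeRestrict := rfl
  have hξ0 : φ.rangeRestrict.rTensor M ξ = 0 := by
    apply hinj
    rw [map_zero, ← LinearMap.comp_apply, ← LinearMap.rTensor_comp, ← hcomp, hφξ]
  have hexact : Function.Exact ((LinearMap.ker φ).subtype.rTensor M)
      (φ.rangeRestrict.rTensor M) := by
    have h1 : Function.Exact (LinearMap.ker φ.rangeRestrict).subtype φ.rangeRestrict :=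
      LinearMap.exact_subtype_ker_map _
    rw [LinearMap.ker_rangeRestrict] at h1
    exact rTensor_exact (R:=R) (M:=↥(LinearMap.ker φ)) (N:=(Fin n →₀ R))
      (P:=↥(LinearMap.range φ)) M h1 φ.surjective_rangeRestrict
  obtain ⟨ζ, hζ⟩ := (hexact ξ).mp hξ0
  obtain ⟨T, hT⟩ := TensorProduct.exists_finsupp_left ζ
  -- apply finsuppScalarLeft to both sides
  have key : ∀ i : Fin n, x i =
      ∑ k ∈ T.support, ((k : Fin n →₀ R) i) • T k := by
    intro i
    have e1 := congrArg (fun z => (finsuppScalarLeft R M (Fin n)) z i) hζ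
    have e2 : ((finsuppScalarLeft R M (Fin n)) ξ) i = x i := by
      rw [hξdef, map_sum]
      rw [Finsupp.finset_sum_apply]
      simp [finsuppScalarLeft_apply_tmul_apply, Finsupp.single_apply]
    have e3 : ((finsuppScalarLeft R M (Fin n)) ((rTensor M (LinearMap.ker φ).subtype) ζ)) i
        = ∑ k ∈ T.support, ((k : Fin n →₀ R) i) • T k := by
      rw [hT, map_finsuppSum, map_finsuppSum, Finsupp.sum_apply]
      rw [Finsupp.sum]
      apply Finset.sum_congr rfl
      intro k _
      simp [finsuppScalarLeft_apply_tmul_apply]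
    rw [← e3, e1, e2]
  have hker : ∀ k : ↥(LinearMap.ker φ), ∑ i, r i * ((k : Fin n →₀ R) i) = 0 := by
    intro k
    have hk : Finsupp.linearCombination R r (k : Fin n →₀ R) = 0 := k.2
    rw [Finsupp.linearCombination_apply,
      Finsupp.sum_fintype _ _ (fun i => zero_smul R (r i))] at hk
    rw [← hk]
    exact Finset.sum_congr rfl fun i _ => by rw [smul_eq_mul, mul_comm]
  refine ⟨T.support.card, fun j i => ((T.support.equivFin.symm j : ↥(LinearMap.ker φ)) :
      Fin n →₀ R) i, fun j => T (T.support.equivFin.symm j : ↥(LinearMap.ker φ)), ?_, ?_⟩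
  · intro j
    exact hker _
  · intro i
    rw [key i, ← Finset.sum_coe_sort T.support (fun k => ((k : Fin n →₀ R) i) • T k)]
    exact (Equiv.sum_comp T.support.equivFin.symm
      (fun k => (((k : ↥(LinearMap.ker φ)) : Fin n →₀ R) i) • T (k : ↥(LinearMap.ker φ)))).symm

section AuxAlg

variable {R S : Type*} [CommRing R] [CommRing S] [Algebra R S]

private lemma aux_mem_map_iff {I : Ideal R} {x : S} :
    x ∈ I.map (algebraMap R S) ↔
      ∃ (n : ℕ) (a : Fin n → R) (u : Fin n → S), (∀ i, a i ∈ I) ∧ x = ∑ i, a i • u i := by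
  constructor
  · intro hx
    have hx' : x ∈ Submodule.span S ((algebraMap R S) '' (I : Set R)) := hx
    obtain ⟨n, c, g, hsum⟩ := Submodule.mem_span_set' (R := S) (M := S) |>.mp hx'
    choose b hball using fun i => (g i).2
    refine ⟨n, b, c, fun i => (hball i).1, ?_⟩
    rw [← hsum]
    refine Finset.sum_congr rfl fun i _ => ?_
    calc c i • (g i : S) = c i * (algebraMap R S) (b i) := by rw [(hball i).2]; rfl
    _ = b i • c i := by rw [Algebra.smul_def, mul_comm]
  · rintro ⟨n, a, u, ha, rfl⟩
    exact Submodule.sum_mem _ fun i _ => by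
      rw [Algebra.smul_def]
      exact Ideal.mul_mem_right _ _ (Ideal.mem_map_of_mem _ (ha i))

private lemma exists_coeffs [Module.Flat R S] {n m : ℕ} (a : Fin n → R) (w : Fin n → S)
    (b : Fin m → R) (v : Fin m → S) (h : ∑ i, a i • w i = ∑ j, b j • v j) :
    ∃ (N : ℕ) (c : Fin N → Fin n → R) (d : Fin N → Fin m → R) (y : Fin N → S),
      (∀ t, ∑ i, a i * c t i = ∑ j, b j * d t j) ∧
      (∀ i, w i = ∑ t, c t i • y t) ∧ (∀ j, v j = ∑ t, d t j • y t) := by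
  let r0 : Fin (n + m) → R := Fin.addCases a (fun j => - b j)
  let x0 : Fin (n + m) → S := Fin.addCases w v
  have h0 : ∑ i : Fin (n + m), r0 i • x0 i = 0 := by
    rw [Fin.sum_univ_add]
    simp only [r0, x0, Fin.addCases_left, Fin.addCases_right, neg_smul]
    rw [h, Finset.sum_neg_distrib]
    exact add_neg_cancel _
  obtain ⟨N, A, y, hrel, hdec⟩ := flat_relation r0 x0 h0
  refine ⟨N, fun t i => A t (Fin.castAdd m i), fun t j => A t (Fin.natAdd n j), y, ?_, ?_, ?_⟩
  · intro t
    have h2 := hrel t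
    rw [Fin.sum_univ_add] at h2
    simp only [r0, Fin.addCases_left, Fin.addCases_right, neg_mul] at h2
    rw [Finset.sum_neg_distrib, add_neg_eq_zero] at h2
    exact h2
  · intro i
    have h2 := hdec (Fin.castAdd m i)
    simpa [x0] using h2
  · intro j
    have h2 := hdec (Fin.natAdd n j)
    simpa [x0] using h2

end AuxAlg

section AuxAlg2

variable {R S : Type*} [CommRing R] [CommRing S] [Algebra R S]

private lemma aux_map_inf [Module.Flat R S] (I J : Ideal R) :
    (I ⊓ J).map (algebraMap R S) = I.map (algebraMap R S) ⊓ J.map (algebraMap R S) := by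
  refine le_antisymm (le_inf (Ideal.map_mono inf_le_left) (Ideal.map_mono inf_le_right)) ?_
  intro x hx
  obtain ⟨n, a, w, ha, hxa⟩ := aux_mem_map_iff.mp hx.1
  obtain ⟨m, b, v, hb, hxb⟩ := aux_mem_map_iff.mp hx.2
  obtain ⟨N, c, d, y, hrel, hw, hv⟩ := exists_coeffs a w b v (hxa ▸ hxb)
  have hx2 : x = ∑ t : Fin N, (∑ i, a i * c t i) • y t := by
    rw [hxa]
    calc ∑ i, a i • w i = ∑ i, ∑ t, (a i * c t i) • y t := by
          refine Finset.sum_congr rfl fun i _ => ?_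
          rw [hw i, Finset.smul_sum]
          exact Finset.sum_congr rfl fun t _ => by rw [smul_smul]
    _ = ∑ t, ∑ i, (a i * c t i) • y t := Finset.sum_comm
    _ = ∑ t : Fin N, (∑ i, a i * c t i) • y t := by
          exact Finset.sum_congr rfl fun t _ => (Finset.sum_smul).symm
  rw [hx2]
  refine Submodule.sum_mem _ fun t _ => ?_
  rw [Algebra.smul_def]
  refine Ideal.mul_mem_right _ _ (Ideal.mem_map_of_mem _ ?_)
  constructor
  · exact Ideal.sum_mem _ fun i _ => Ideal.mul_mem_right _ _ (ha i)
  · rw [hrel t]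
    exact Ideal.sum_mem _ fun j _ => Ideal.mul_mem_right _ _ (hb j)

private lemma aux_ohmRush [Module.Flat R S] [IsArtinianRing R] (s : S) :
    s ∈ (ORContent (algebraMap R S) s).map (algebraMap R S) := by
  obtain ⟨M, hM, hmin⟩ := IsArtinian.set_has_minimal
    {I : Ideal R | s ∈ I.map (algebraMap R S)} ⟨⊤, by simp [Ideal.map_top]⟩
  have hMle : ∀ I ∈ {I : Ideal R | s ∈ I.map (algebraMap R S)}, M ≤ I := by
    intro I hI
    have hmem : M ⊓ I ∈ {I : Ideal R | s ∈ I.map (algebraMap R S)} := by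
      simp only [Set.mem_setOf_eq, aux_map_inf]
      exact ⟨hM, hI⟩
    have : M ⊓ I = M := by
      by_contra hne
      exact hmin _ hmem (lt_of_le_of_ne inf_le_left hne)
    exact this ▸ inf_le_right
  have : ORContent (algebraMap R S) s = M :=
    le_antisymm (sInf_le hM) (le_sInf hMle)
  rw [this]
  exact hM

private lemma key_L [Module.Flat R S] {m P Q : Ideal R} (hm : m.IsMaximal)
    (hprime : (m.map (algebraMap R S)).IsPrime) {s : S}
    (hs : s ∉ m.map (algebraMap R S)) (hmQ : m * Q ≤ P) {u : S}
    (hu : u ∈ Q.map (algebraMap R S)) (hsu : s * u ∈ P.map (algebraMap R S)) :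
    u ∈ P.map (algebraMap R S) := by
  obtain ⟨n, q, w, hq, rfl⟩ := aux_mem_map_iff.mp hu
  clear hu
  induction n with
  | zero => simpa using Ideal.zero_mem _
  | succ n IH =>
    by_cases hind : ∀ c : Fin (n+1) → R, (∑ i, c i * q i) ∈ P → ∀ i, c i ∈ m
    · -- independent case
      have hswsum : ∑ i, q i • (s * w i) = s * (∑ i, q i • w i) := by
        rw [Finset.mul_sum]
        exact Finset.sum_congr rfl fun i _ => by
          rw [Algebra.smul_def, Algebra.smul_def]; ring
      obtain ⟨e, p, z, hp, hpz⟩ := aux_mem_map_iff.mp (hswsum ▸ hsu)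
      obtain ⟨N, c, d, y, hrel, hw', _⟩ := exists_coeffs q (fun i => s * w i) p z hpz
      have hcm : ∀ t i, c t i ∈ m := by
        intro t i
        refine hind (c t) ?_ i
        have h2 : ∑ i, c t i * q i = ∑ j, p j * d t j := by
          rw [← hrel t]; exact Finset.sum_congr rfl fun i _ => mul_comm _ _
        rw [h2]
        exact Ideal.sum_mem _ fun j _ => Ideal.mul_mem_right _ _ (hp j)
      have hwm : ∀ i, w i ∈ m.map (algebraMap R S) := by
        intro i
        refine (hprime.mem_or_mem ?_).resolve_left hs
        show s * w i ∈ _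
        rw [hw' i]
        exact Submodule.sum_mem _ fun t _ => by
          rw [Algebra.smul_def]
          exact Ideal.mul_mem_right _ _ (Ideal.mem_map_of_mem _ (hcm t i))
      refine Submodule.sum_mem _ fun i _ => ?_
      obtain ⟨e2, mu, nu, hmu, hweq⟩ := aux_mem_map_iff.mp (hwm i)
      rw [hweq, Finset.smul_sum]
      refine Submodule.sum_mem _ fun k _ => ?_
      rw [smul_smul, Algebra.smul_def]
      refine Ideal.mul_mem_right _ _ (Ideal.mem_map_of_mem _ (hmQ ?_))
      rw [mul_comm (q i) (mu k)]
      exact Ideal.mul_mem_mul (hmu k) (hq i)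
    · -- reduction case
      push_neg at hind
      obtain ⟨c, hcP, i0, hci0⟩ := hind
      obtain ⟨r, bb, hbbm, hrc⟩ := hm.exists_inv hci0
      set G := algebraMap R S with hG
      set p := ∑ i, c i * q i with hpdef
      set q' : Fin n → R := fun j => q (i0.succAbove j) with hq'def
      set w' : Fin n → S := fun j =>
        w (i0.succAbove j) - G (r * c (i0.succAbove j)) * w i0 with hw'def
      set π : S := G (r * p + bb * q i0) * w i0 with hπdef
      have hqid : q i0 = r * p + bb * q i0
          - ∑ j, q (i0.succAbove j) * (r * c (i0.succAbove j)) := by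
        have hpe : p = c i0 * q i0 + ∑ j, c (i0.succAbove j) * q (i0.succAbove j) :=
          Fin.sum_univ_succAbove (fun i => c i * q i) i0
        rw [hpe]
        have h3 : ∑ j, q (i0.succAbove j) * (r * c (i0.succAbove j))
            = r * ∑ j, c (i0.succAbove j) * q (i0.succAbove j) := by
          rw [Finset.mul_sum]
          exact Finset.sum_congr rfl fun j _ => by ring
        rw [h3]
        linear_combination (-(q i0)) * hrc
      have hsplit : ∑ i : Fin (n+1), q i • w i = π + ∑ j, q' j • w' j := by
        rw [Fin.sum_univ_succAbove (fun i => q i • w i) i0]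
        have hw'exp : ∀ j, q' j • w' j = q (i0.succAbove j) • w (i0.succAbove j)
            - G (q (i0.succAbove j) * (r * c (i0.succAbove j))) * w i0 := fun j => by
          simp only [hq'def, hw'def, smul_sub, Algebra.smul_def, map_mul, ← hG]
          ring
        rw [Finset.sum_congr rfl fun j _ => hw'exp j, Finset.sum_sub_distrib,
          ← Finset.sum_mul, ← map_sum]
        have h4 : q i0 • w i0
            = π - G (∑ j, q (i0.succAbove j) * (r * c (i0.succAbove j))) * w i0 := by
          rw [Algebra.smul_def, hπdef, ← sub_mul, ← map_sub, ← hqid]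
        rw [h4]
        ring
      have hπP : π ∈ P.map (algebraMap R S) := by
        refine Ideal.mul_mem_right _ _ (Ideal.mem_map_of_mem _ ?_)
        refine Ideal.add_mem _ (Ideal.mul_mem_left _ _ hcP) (hmQ ?_)
        exact Ideal.mul_mem_mul hbbm (hq i0)
      have hsu' : s * (∑ j, q' j • w' j) ∈ P.map (algebraMap R S) := by
        have h5 : s * (∑ j, q' j • w' j) = s * (∑ i, q i • w i) - s * π := by
          rw [hsplit]; ring
        rw [h5]
        exact Submodule.sub_mem _ hsu (Ideal.mul_mem_left _ _ hπP)
      have hres := IH q' w' (fun j => hq _) hsu'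
      rw [hsplit]
      exact Submodule.add_mem _ hπP hres

private lemma kl_chain [Module.Flat R S] {m : Ideal R} (hm : m.IsMaximal)
    (hprime : (m.map (algebraMap R S)).IsPrime) {s t : S}
    (hs : s ∉ m.map (algebraMap R S)) {I : Ideal R}
    (hst : s * t ∈ I.map (algebraMap R S)) (k : ℕ) :
    t ∈ (I ⊔ m ^ k).map (algebraMap R S) := by
  induction k with
  | zero =>
    rw [pow_zero, Ideal.one_eq_top, sup_top_eq, Ideal.map_top]
    trivial
  | succ k IH =>
    rw [Ideal.map_sup] at IH
    obtain ⟨α, hα, β, hβ, ht⟩ := Submodule.mem_sup.mp IH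
    have hsβ : s * β ∈ ((I ⊓ m ^ k) ⊔ m ^ (k+1)).map (algebraMap R S) := by
      have h1 : s * β ∈ (I.map (algebraMap R S)) ⊓ ((m ^ k).map (algebraMap R S)) := by
        constructor
        · have h2 : s * β = s * t - s * α := by rw [← ht]; ring
          rw [h2]
          exact Submodule.sub_mem _ hst (Ideal.mul_mem_left _ _ hα)
        · exact Ideal.mul_mem_left _ _ hβ
      rw [← aux_map_inf] at h1
      exact Ideal.map_mono le_sup_left h1
    have hβ' : β ∈ ((I ⊓ m ^ k) ⊔ m ^ (k+1)).map (algebraMap R S) := by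
      refine key_L hm hprime hs (Q := m ^ k) ?_ hβ hsβ
      calc m * m ^ k = m ^ (k+1) := by rw [pow_succ, mul_comm]
      _ ≤ _ := le_sup_right
    rw [Ideal.map_sup]
    rw [← ht]
    refine Submodule.add_mem _ (Submodule.mem_sup_left hα) ?_
    have h3 : ((I ⊓ m ^ k) ⊔ m ^ (k+1)) ≤ I ⊔ m ^ (k+1) :=
      sup_le_sup_right inf_le_left _
    have h4 := Ideal.map_mono h3 hβ'
    rw [Ideal.map_sup] at h4
    exact h4

private lemma aux_coprime_inf {X Y K L : Ideal R} (hco : IsCoprime K L)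
    (h1 : X ≤ Y ⊔ K) (h2 : X ≤ Y ⊔ L) : X ≤ Y ⊔ K * L := by
  intro x hx
  have hone : (1 : R) ∈ K ⊔ L := by
    rw [Ideal.isCoprime_iff_sup_eq] at hco
    rw [hco]; trivial
  obtain ⟨kk, hk, ll, hl, hkl⟩ := Submodule.mem_sup.mp hone
  obtain ⟨y1, hy1, k1, hk1, hx1⟩ := Submodule.mem_sup.mp (h1 hx)
  obtain ⟨y2, hy2, l1, hl1, hx2⟩ := Submodule.mem_sup.mp (h2 hx)
  have hxe : x = x * kk + x * ll := by
    rw [← mul_add, hkl, mul_one]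
  rw [hxe]
  refine Submodule.add_mem _ ?_ ?_
  · rw [← hx2]
    have : (y2 + l1) * kk = y2 * kk + kk * l1 := by ring
    rw [this]
    exact Submodule.add_mem _ (Submodule.mem_sup_left (Ideal.mul_mem_right _ _ hy2))
      (Submodule.mem_sup_right (Ideal.mul_mem_mul hk hl1))
  · rw [← hx1]
    have : (y1 + k1) * ll = y1 * ll + k1 * ll := by ring
    rw [this]
    exact Submodule.add_mem _ (Submodule.mem_sup_left (Ideal.mul_mem_right _ _ hy1))
      (Submodule.mem_sup_right (Ideal.mul_mem_mul hk1 hl))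

private lemma aux_le_of_max [IsArtinianRing R] {X Y : Ideal R} {n : ℕ}
    (hJ : (Ideal.jacobson (⊥ : Ideal R)) ^ n = ⊥)
    (h : ∀ m : Ideal R, m.IsMaximal → X ≤ Y ⊔ m ^ n) : X ≤ Y := by
  classical
  have hfin := IsArtinianRing.setOfPred_isMaximal_finite R
  have main : ∀ F : Finset (Ideal R), (∀ m ∈ F, m.IsMaximal) →
      X ≤ Y ⊔ (∏ m ∈ F, m ^ n) := by
    intro F
    induction F using Finset.induction_on with
    | empty =>
      intro _
      rw [Finset.prod_empty, Ideal.one_eq_top, sup_top_eq]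
      exact le_top
    | @insert a F' hnot IH =>
      intro hmax
      rw [Finset.prod_insert hnot]
      have hco : IsCoprime (a ^ n) (∏ m ∈ F', m ^ n) := by
        refine IsCoprime.prod_right fun m hm => ?_
        have hne : a ≠ m := fun he => hnot (he ▸ hm)
        exact (Ideal.isCoprime_iff_sup_eq.mpr ((hmax a (Finset.mem_insert_self a F')).coprime_of_ne
          (hmax m (Finset.mem_insert_of_mem hm)) hne)).pow
      exact aux_coprime_inf hco (h a (hmax a (Finset.mem_insert_self a F')))
        (IH fun m hm => hmax m (Finset.mem_insert_of_mem hm))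
  have hmain := main hfin.toFinset (fun m hm => (Set.Finite.mem_toFinset _).mp hm)
  have hprod : (∏ m ∈ hfin.toFinset, m ^ n) ≤ (Ideal.jacobson (⊥ : Ideal R)) ^ n := by
    rw [Finset.prod_pow]
    refine Ideal.pow_right_mono ?_ n
    rw [Ideal.jacobson]
    refine le_sInf ?_
    rintro J ⟨-, hJm⟩
    exact le_trans Ideal.prod_le_inf (Finset.inf_le ((Set.Finite.mem_toFinset _).mpr hJm))
  calc X ≤ Y ⊔ (∏ m ∈ hfin.toFinset, m ^ n) := hmain
  _ ≤ Y ⊔ ⊥ := sup_le_sup_left (le_trans hprod (le_of_eq hJ)) Y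
  _ = Y := sup_bot_eq Y

private lemma aux_content_formula [Module.Flat R S] [IsArtinianRing R]
    (hP : ∀ p : Ideal R, p.IsPrime → (p.map (algebraMap R S)).IsPrime) (s t : S) :
    ∃ n : ℕ, 0 < n ∧ ORContent (algebraMap R S) s ^ n * ORContent (algebraMap R S) t
      = ORContent (algebraMap R S) s ^ (n - 1) * ORContent (algebraMap R S) (s * t) := by
  obtain ⟨k, hk⟩ := IsArtinianRing.isNilpotent_jacobson_bot (R := R)
  have hk1 : (Ideal.jacobson (⊥ : Ideal R)) ^ (k + 1) = ⊥ := by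
    rw [pow_succ, hk, zero_mul, Ideal.zero_eq_bot]
  set A := ORContent (algebraMap R S) s with hA
  set B := ORContent (algebraMap R S) t with hB
  set C := ORContent (algebraMap R S) (s * t) with hC
  have hCle : C ≤ A * B := by
    apply sInf_le
    show s * t ∈ (A * B).map (algebraMap R S)
    rw [Ideal.map_mul]
    exact Ideal.mul_mem_mul (aux_ohmRush s) (aux_ohmRush t)
  refine ⟨k + 1, Nat.succ_pos _, ?_⟩
  have he : k + 1 - 1 = k := rfl
  rw [he]
  refine le_antisymm ?_ ?_
  · refine aux_le_of_max hk1 ?_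
    intro m hm
    by_cases hAm : A ≤ m
    · calc A ^ (k+1) * B ≤ A ^ (k+1) := Ideal.mul_le_left
      _ ≤ m ^ (k+1) := Ideal.pow_right_mono hAm _
      _ ≤ _ := le_sup_right
    · have hsm : s ∉ m.map (algebraMap R S) := fun hmem => hAm (sInf_le hmem)
      have hBle : B ≤ C ⊔ m ^ (k+1) :=
        sInf_le (kl_chain hm (hP m hm.isPrime) hsm (aux_ohmRush (s * t)) (k + 1))
      calc A ^ (k+1) * B ≤ A ^ k * B :=
            Ideal.mul_mono_left (Ideal.pow_le_pow_right (Nat.le_succ k))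
      _ ≤ A ^ k * (C ⊔ m ^ (k+1)) := Ideal.mul_mono_right hBle
      _ = A ^ k * C ⊔ A ^ k * m ^ (k+1) := Ideal.mul_sup _ _ _
      _ ≤ A ^ k * C ⊔ m ^ (k+1) := sup_le_sup_left Ideal.mul_le_right _
  · calc A ^ k * C ≤ A ^ k * (A * B) := Ideal.mul_mono_right hCle
    _ = A ^ (k+1) * B := by rw [← mul_assoc, ← pow_succ]

private lemma aux_ff [Module.Flat R S]
    (hP : ∀ m : Ideal R, m.IsMaximal → m.map (algebraMap R S) ≠ ⊤) :
    Module.FaithfullyFlat R S := by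
  refine { toFlat := inferInstance, submodule_ne_top := fun m hm htop => hP m hm ?_ }
  rw [Ideal.eq_top_iff_one]
  have h1 : (1 : S) ∈ m • (⊤ : Submodule R S) := by rw [htop]; trivial
  rw [Ideal.smul_top_eq_map] at h1
  exact h1

end AuxAlg2

end FlatRelationAux

/-- For an extension `R ⊆ S` with `R` Artinian, the following are
equivalent: content algebra; semicontent algebra; faithfully flat weak content algebra;
flat with primes of `R` extending to primes of `S`. -/
theorem artinian_content_tfae {R S : Type*} [CommRing R] [CommRing S] [IsArtinianRing R]
    (f : R →+* S) (hinj : Function.Injective f) :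
    (IsContentAlgebra f ↔ IsSemicontentAlgebra f) ∧
    (IsSemicontentAlgebra f ↔ (RingHomFaithfullyFlat f ∧ IsWeakContentAlgebra f)) ∧
    ((RingHomFaithfullyFlat f ∧ IsWeakContentAlgebra f) ↔
      (RingHomFlat f ∧ ∀ p : Ideal R, p.IsPrime → (p.map f).IsPrime)) := by
  letI := f.toAlgebra
  have h41 : (RingHomFlat f ∧ ∀ p : Ideal R, p.IsPrime → (p.map f).IsPrime) →
      IsContentAlgebra f := by
    rintro ⟨hflat, hp⟩
    haveI : Module.Flat R S := hflat
    have hp' : ∀ p : Ideal R, p.IsPrime → ((p.map (algebraMap R S)).IsPrime) := hp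
    refine ⟨fun s => aux_ohmRush s, ?_, fun s t => aux_content_formula hp' s t⟩
    exact aux_ff fun m hm => (hp' m hm.isPrime).ne_top
  have h12 : IsContentAlgebra f → IsSemicontentAlgebra f := by
    rintro ⟨hOR, hFF, hform⟩
    refine ⟨hOR, hFF, fun W s t hW => ?_⟩
    obtain ⟨n, hn, he⟩ := hform s t
    have he2 := congrArg (Ideal.map (algebraMap R (Localization W))) he
    rw [Ideal.map_mul, Ideal.map_mul, Ideal.map_pow, Ideal.map_pow, hW] at he2
    simp only [Ideal.top_pow, Ideal.top_mul] at he2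
    exact he2.symm
  have h23 : IsSemicontentAlgebra f → RingHomFaithfullyFlat f ∧ IsWeakContentAlgebra f := by
    rintro ⟨hOR, hFF, hsemi⟩
    refine ⟨hFF, hOR, fun s t => ?_⟩
    have hCle : ORContent f (s * t) ≤ ORContent f s * ORContent f t := by
      apply sInf_le
      show s * t ∈ Ideal.map f (ORContent f s * ORContent f t)
      rw [Ideal.map_mul]
      exact Ideal.mul_mem_mul (hOR s) (hOR t)
    rw [Ideal.radical_eq_sInf, Ideal.radical_eq_sInf]
    congr 1
    ext p
    simp only [Set.mem_setOf_eq, and_congr_left_iff]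
    intro hp
    constructor
    · intro hCp
      by_cases hA : ORContent f s ≤ p
      · exact le_trans Ideal.mul_le_left hA
      · obtain ⟨a, haA, hap⟩ := SetLike.not_le_iff_exists.mp hA
        have hW : Ideal.map (algebraMap R (Localization p.primeCompl)) (ORContent f s) = ⊤ :=
          Ideal.eq_top_of_isUnit_mem _ (Ideal.mem_map_of_mem _ haA)
            (IsLocalization.map_units (Localization p.primeCompl) (⟨a, hap⟩ : p.primeCompl))
        have heq := hsemi p.primeCompl s t hW
        have hBle : ORContent f t ≤ p := by
          intro b hb
          have hb1 : algebraMap R (Localization p.primeCompl) b ∈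
              Ideal.map (algebraMap R (Localization p.primeCompl)) (ORContent f t) :=
            Ideal.mem_map_of_mem _ hb
          rw [← heq] at hb1
          have hb2 : algebraMap R (Localization p.primeCompl) b ∈
              Ideal.map (algebraMap R (Localization p.primeCompl)) p :=
            Ideal.map_mono hCp hb1
          have hdisj : Disjoint ((p.primeCompl : Submonoid R) : Set R) (p : Set R) :=
            Set.disjoint_left.mpr fun x hx hx2 => hx hx2
          have hb3 := IsLocalization.comap_map_of_isPrime_disjoint
            (p.primeCompl) (Localization p.primeCompl) hp hdisj
          rw [← hb3]
          exact Ideal.mem_comap.mpr hb2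
        exact le_trans Ideal.mul_le_right hBle
    · intro hABp
      exact le_trans hCle hABp
  have h34 : RingHomFaithfullyFlat f ∧ IsWeakContentAlgebra f →
      RingHomFlat f ∧ ∀ p : Ideal R, p.IsPrime → (p.map f).IsPrime := by
    rintro ⟨hFF, hOR, hrad⟩
    haveI : Module.FaithfullyFlat R S := hFF
    refine ⟨(inferInstance : Module.Flat R S), fun p hp => ?_⟩
    constructor
    · intro htop
      obtain ⟨m, hm, hpm⟩ := p.exists_le_maximal hp.ne_top
      have hmtop : Ideal.map f m = ⊤ :=
        eq_top_iff.mpr (htop ▸ Ideal.map_mono hpm)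
      refine Module.FaithfullyFlat.submodule_ne_top (R := R) (M := S) hm ?_
      rw [Ideal.smul_top_eq_map]
      show Submodule.restrictScalars R (Ideal.map (algebraMap R S) m) = ⊤
      rw [show Ideal.map (algebraMap R S) m = Ideal.map f m from rfl, hmtop]
      rfl
    · intro x y hxy
      have hC : ORContent f (x * y) ≤ p := sInf_le hxy
      have h1 : ORContent f x * ORContent f y ≤ p := by
        calc ORContent f x * ORContent f y
            ≤ (ORContent f x * ORContent f y).radical := Ideal.le_radical
        _ = (ORContent f (x * y)).radical := (hrad x y).symm
        _ ≤ p.radical := Ideal.radical_mono hC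
        _ = p := hp.radical
      rcases (Ideal.IsPrime.mul_le hp).mp h1 with h | h
      · exact Or.inl (Ideal.map_mono h (hOR x))
      · exact Or.inr (Ideal.map_mono h (hOR y))
  exact ⟨⟨h12, fun h => h41 (h34 (h23 h))⟩, ⟨h23, fun h => h12 (h41 (h34 h))⟩,
    ⟨h34, fun h => h23 (h12 (h41 h))⟩⟩
end

section
/- Let R be a Prüfer domain and S a content R-algebra. Then for every prime ideal p of R, the extension pS is a prime ideal of S and the height of p in R equals the height of pS in S. -/
section ORAux
variable {R S : Type*} [CommRing R] [CommRing S]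

namespace ORAux

variable (f : R →+* S)

lemma orcontent_le_iff (hOR : IsOhmRushAlgebra f) {s : S} {I : Ideal R} :
    ORContent f s ≤ I ↔ s ∈ Ideal.map f I :=
  ⟨fun h => Ideal.map_mono h (hOR s), fun h => sInf_le h⟩

lemma eq_zero_of_orcontent_bot (hOR : IsOhmRushAlgebra f) {s : S}
    (h : ORContent f s = ⊥) : s = 0 := by
  have := hOR s
  rw [h, Ideal.map_bot] at this
  simpa using this

open TensorProduct in
lemma purity (hff : RingHomFaithfullyFlat f) {I : Ideal R} {a : R}
    (h : f a ∈ Ideal.map f I) : a ∈ I := by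
  letI := f.toAlgebra
  haveI : Module.FaithfullyFlat R S := hff
  have halg : algebraMap R S = f := rfl
  set J : Ideal R := I.colon (Ideal.span {a}) with hJ
  have hJmem : ∀ x : R, x ∈ J ↔ x * a ∈ I := fun x => by rw [Ideal.mem_colon_span_singleton]
  have hle : (J : Submodule R R) ≤ Submodule.comap (LinearMap.lsmul R R a) (I : Submodule R R) := by
    intro x hx
    simpa [mul_comm] using (hJmem x).mp hx
  set φ : (R ⧸ J) →ₗ[R] (R ⧸ I) := Submodule.mapQ _ _ (LinearMap.lsmul R R a) hle with hφdef
  have hφ : Function.Injective φ := by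
    rw [← LinearMap.ker_eq_bot, eq_bot_iff]
    rintro q hq
    obtain ⟨x, rfl⟩ := Submodule.Quotient.mk_surjective _ q
    have h0 : (Submodule.Quotient.mk (a • x) : R ⧸ I) = 0 := by
      rw [LinearMap.mem_ker, hφdef, Submodule.mapQ_apply] at hq
      exact hq
    rw [Submodule.Quotient.mk_eq_zero] at h0
    simp only [Submodule.mem_bot]
    rw [Submodule.Quotient.mk_eq_zero]
    exact (hJmem x).mpr (by simpa [mul_comm] using h0)
  have hinj : Function.Injective (φ.lTensor S) :=
    Module.Flat.lTensor_preserves_injective_linearMap (M := S) φ hφ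
  have key : φ.lTensor S ((1:S) ⊗ₜ[R] Submodule.Quotient.mk 1) =
      (1:S) ⊗ₜ (Submodule.Quotient.mk a : R ⧸ I) := by
    rw [LinearMap.lTensor_tmul, hφdef, Submodule.mapQ_apply]
    simp
  have h2 : (1:S) ⊗ₜ[R] (Submodule.Quotient.mk a : R ⧸ I) = 0 := by
    apply (TensorProduct.tensorQuotEquivQuotSMul S I).injective
    rw [map_zero]
    have := TensorProduct.tensorQuotEquivQuotSMul_tmul_mk (M := S) I (1:S) a
    rw [show (Ideal.Quotient.mk I a) = (Submodule.Quotient.mk a : R ⧸ I) from rfl] at this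
    rw [this, Submodule.Quotient.mk_eq_zero, Ideal.smul_top_eq_map]
    show a • (1:S) ∈ I.map (algebraMap R S)
    rw [Algebra.smul_def, mul_one, halg]
    exact h
  have h3 : (1:S) ⊗ₜ[R] (Submodule.Quotient.mk 1 : R ⧸ J) = 0 := by
    apply hinj
    rw [key, map_zero, h2]
  have h4 : (1:R) ∈ J := by
    have := congrArg (TensorProduct.tensorQuotEquivQuotSMul S J) h3
    have heq := TensorProduct.tensorQuotEquivQuotSMul_tmul_mk (M := S) J (1:S) 1
    rw [show (Ideal.Quotient.mk J 1) = (Submodule.Quotient.mk 1 : R ⧸ J) from rfl] at heq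
    rw [heq, map_zero, Submodule.Quotient.mk_eq_zero, one_smul, Ideal.smul_top_eq_map] at this
    have h5 : Ideal.map (algebraMap R S) J = ⊤ := Ideal.eq_top_of_isUnit_mem _ this isUnit_one
    have hft := (Module.FaithfullyFlat.iff_flat_and_ideal_smul_eq_top R S).mp inferInstance
    have h6 : J = ⊤ := hft.2 J (by rw [Ideal.smul_top_eq_map, h5]; rfl)
    rw [h6]; trivial
  simpa using (hJmem 1).mp h4


open scoped Classical in
lemma orcontent_fg (hOR : IsOhmRushAlgebra f) (s : S) :
    ∃ T : Finset R, ↑T ⊆ (ORContent f s : Set R) ∧ ORContent f s = Ideal.span ↑T := by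
  have h1 : s ∈ Ideal.span (f '' (ORContent f s : Set R)) := hOR s
  obtain ⟨U, hUsub, hU⟩ := Submodule.mem_span_finite_of_mem_span h1
  -- pick preimages of elements of U
  have hpre : ∀ u : U, ∃ r : R, r ∈ ORContent f s ∧ f r = u := by
    rintro ⟨u, hu⟩
    obtain ⟨r, hr, hfr⟩ := hUsub hu
    exact ⟨r, hr, hfr⟩
  choose g hg1 hg2 using hpre
  refine ⟨U.attach.image g, ?_, ?_⟩
  · intro r hr
    rw [Finset.coe_image] at hr
    obtain ⟨u, _, rfl⟩ := hr
    exact hg1 u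
  · apply le_antisymm
    · rw [orcontent_le_iff f hOR, Ideal.map_span]
      refine Ideal.span_mono ?_ hU
      intro u hu
      refine ⟨g ⟨u, hu⟩, ?_, hg2 _⟩
      rw [Finset.coe_image]
      exact Set.mem_image_of_mem g (Finset.mem_coe.mpr (Finset.mem_attach _ _))
    · rw [Ideal.span_le]
      intro r hr
      rw [Finset.coe_image] at hr
      obtain ⟨u, _, rfl⟩ := hr
      exact hg1 u

-- cancellation of nonzero principal ideals in a domain
lemma span_singleton_cancel [IsDomain R] {c : R} (hc : c ≠ 0) {A B : Ideal R}
    (h : Ideal.span {c} * A = Ideal.span {c} * B) : A = B := by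
  have key : ∀ {A B : Ideal R}, Ideal.span {c} * A = Ideal.span {c} * B → A ≤ B := by
    intro A B h a ha
    have : c * a ∈ Ideal.span {c} * B := by
      rw [← h]
      exact Ideal.mem_span_singleton_mul.mpr ⟨a, ha, rfl⟩
    obtain ⟨b, hb, hcb⟩ := Ideal.mem_span_singleton_mul.mp this
    rwa [← mul_left_cancel₀ hc hcb]
  exact le_antisymm (key h) (key h.symm)

-- the content of f r
lemma orcontent_algebraMap (hOR : IsOhmRushAlgebra f) (hff : RingHomFaithfullyFlat f)
    (r : R) : ORContent f (f r) = Ideal.span {r} := by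
  apply le_antisymm
  · rw [orcontent_le_iff f hOR]
    exact Ideal.mem_map_of_mem f (Ideal.mem_span_singleton_self r)
  · rw [Ideal.span_singleton_le_iff_mem]
    exact purity f hff (hOR (f r))

-- content of a scalar multiple (Dedekind–Mertens + principal cancellation)
lemma orcontent_smul [IsDomain R] (hf : IsContentAlgebra f) {r : R} (hr : r ≠ 0) (s : S) :
    ORContent f (f r * s) = Ideal.span {r} * ORContent f s := by
  obtain ⟨hOR, hff, hDM⟩ := hf
  obtain ⟨n, hn, heq⟩ := hDM (f r) s
  obtain ⟨m, rfl⟩ := Nat.exists_eq_succ_of_ne_zero hn.ne'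
  rw [orcontent_algebraMap f hOR hff, Nat.succ_sub_one] at heq
  have h1 : Ideal.span {r} ^ (m + 1) = Ideal.span {r ^ m} * Ideal.span {r} := by
    rw [pow_succ, Ideal.span_singleton_pow]
  rw [h1, Ideal.span_singleton_pow, mul_assoc] at heq
  exact (span_singleton_cancel (pow_ne_zero m hr) heq).symm


lemma comap_map_eq (hff : RingHomFaithfullyFlat f) (I : Ideal R) :
    Ideal.comap f (Ideal.map f I) = I :=
  le_antisymm (fun _ ha => purity f hff ha) Ideal.le_comap_map

/-- Extension of a prime is prime, in a content algebra. -/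
lemma map_isPrime (hf : IsContentAlgebra f) {p : Ideal R} (hp : p.IsPrime) :
    (Ideal.map f p).IsPrime := by
  obtain ⟨hOR, hff, hDM⟩ := hf
  constructor
  · intro htop
    have : (1 : R) ∈ p := by
      apply purity f hff
      rw [htop, map_one]
      trivial
    exact hp.ne_top (Ideal.eq_top_of_isUnit_mem _ this isUnit_one)
  · intro s t hst
    have hst' : ORContent f (s * t) ≤ p := (orcontent_le_iff f hOR).mpr hst
    obtain ⟨n, hn, heq⟩ := hDM s t
    have hpow : (ORContent f s * ORContent f t) ^ n ≤ p := by
      rw [mul_pow]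
      calc ORContent f s ^ n * ORContent f t ^ n
          ≤ ORContent f s ^ n * ORContent f t :=
            Ideal.mul_mono_right (Ideal.pow_le_self hn.ne')
        _ = ORContent f s ^ (n - 1) * ORContent f (s * t) := heq
        _ ≤ ORContent f (s * t) := Ideal.mul_le_right
        _ ≤ p := hst'
    have hmul : ORContent f s * ORContent f t ≤ p := hp.le_of_pow_le hpow
    rcases hp.mul_le.mp hmul with h | h
    · exact Or.inl ((orcontent_le_iff f hOR).mp h)
    · exact Or.inr ((orcontent_le_iff f hOR).mp h)

/-- `b` divides `a` away from `p`. -/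
def DvdAt (p : Ideal R) (b a : R) : Prop := ∃ s r : R, s ∉ p ∧ s * a = r * b

lemma dvdAt_refl (p : Ideal R) [hp : p.IsPrime] (a : R) : DvdAt p a a :=
  ⟨1, 1, fun h => hp.ne_top (Ideal.eq_top_of_isUnit_mem _ h isUnit_one), rfl⟩

lemma dvdAt_trans {p : Ideal R} [hp : p.IsPrime] {a b c : R}
    (h1 : DvdAt p a b) (h2 : DvdAt p b c) : DvdAt p a c := by
  obtain ⟨s, r, hs, hsr⟩ := h1
  obtain ⟨s', r', hs', hsr'⟩ := h2
  refine ⟨s * s', r' * r, fun h => ?_, by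
    calc s * s' * c = s * (s' * c) := by ring
      _ = s * (r' * b) := by rw [hsr']
      _ = r' * (s * b) := by ring
      _ = r' * (r * a) := by rw [hsr]
      _ = r' * r * a := by ring⟩
  rcases hp.mem_or_mem h with h | h
  exacts [hs h, hs' h]

/-- In a Prüfer domain, local divisibility at a prime is total. -/
lemma dvdAt_total (hR : IsPruferDomain R) (p : Ideal R) (hp : p.IsPrime) (a b : R) :
    DvdAt p b a ∨ DvdAt p a b := by
  obtain ⟨m, hm, hpm⟩ := Ideal.exists_le_maximal p hp.ne_top
  haveI := hm.isPrime
  obtain ⟨c, hc⟩ := (hR.2 m hm).2 (algebraMap R (Localization.AtPrime m) a)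
    (algebraMap R (Localization.AtPrime m) b)
  obtain ⟨⟨x, u⟩, hxu⟩ := IsLocalization.surj m.primeCompl c
  have key : ∀ a b : R, algebraMap R (Localization.AtPrime m) a * c
      = algebraMap R (Localization.AtPrime m) b → DvdAt p a b := by
    intro a b hab
    have h1 : algebraMap R (Localization.AtPrime m) (a * x)
        = algebraMap R (Localization.AtPrime m) (b * u) := by
      rw [map_mul, map_mul, ← hab, mul_assoc, hxu]
    obtain ⟨t, ht⟩ := (IsLocalization.eq_iff_exists m.primeCompl _).mp h1
    refine ⟨(t : R) * u, (t : R) * x, fun h => ?_, by push_cast; linear_combination -ht⟩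
    rcases hm.isPrime.mem_or_mem (hpm h) with h' | h'
    · exact t.2 h'
    · exact u.2 h'
  rcases hc with h | h
  · exact Or.inr (key a b h)
  · exact Or.inl (key b a h)


variable {f}

lemma dvdAt_max (hR : IsPruferDomain R) {p : Ideal R} (hp : p.IsPrime)
    (T : Finset R) (hT : T.Nonempty) : ∃ b ∈ T, ∀ a ∈ T, DvdAt p b a := by
  classical
  haveI := hp
  induction T using Finset.induction_on with
  | empty => exact absurd hT (by simp)
  | @insert c T hc ih =>
    rcases T.eq_empty_or_nonempty with rfl | hne
    · refine ⟨c, by simp, ?_⟩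
      intro a ha
      simp only [Finset.mem_insert, Finset.notMem_empty, or_false] at ha
      subst ha
      exact dvdAt_refl p a
    · obtain ⟨b, hbT, hb⟩ := ih hne
      rcases dvdAt_total hR p hp c b with hbc | hcb
      · refine ⟨b, Finset.mem_insert_of_mem hbT, ?_⟩
        intro a ha
        rcases Finset.mem_insert.mp ha with rfl | ha
        · exact hbc
        · exact hb a ha
      · refine ⟨c, Finset.mem_insert_self c T, ?_⟩
        intro a ha
        rcases Finset.mem_insert.mp ha with rfl | ha
        · exact dvdAt_refl p a
        · exact dvdAt_trans hcb (hb a ha)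

lemma exists_local_gen (hR : IsPruferDomain R) {p : Ideal R} (hp : p.IsPrime)
    {I : Ideal R} (hI : I ≠ ⊥) {T : Finset R} (hTsub : ↑T ⊆ (I : Set R))
    (hTspan : I = Ideal.span ↑T) :
    ∃ b ∈ I, b ≠ 0 ∧ ∃ s : R, s ∉ p ∧ ∀ a ∈ I, s * a ∈ Ideal.span {b} := by
  classical
  haveI : IsDomain R := hR.1
  have hTne : T.Nonempty := by
    rcases T.eq_empty_or_nonempty with rfl | h
    · exact absurd hTspan (by simpa using hI)
    · exact h
  obtain ⟨b, hbT, hb⟩ := dvdAt_max hR hp T hTne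
  -- choose witnesses for each element of T
  have hch : ∀ a : T, ∃ st : R × R, st.1 ∉ p ∧ st.1 * (a : R) = st.2 * b := by
    rintro ⟨a, ha⟩
    obtain ⟨s, r, hs, hsr⟩ := hb a ha
    exact ⟨(s, r), hs, hsr⟩
  choose w hw1 hw2 using hch
  set s : R := ∏ a ∈ T.attach, (w a).1 with hs
  have hsp : s ∉ p := by
    intro hsp
    haveI := hp
    obtain ⟨a, -, ha⟩ := Ideal.IsPrime.prod_mem_iff.mp hsp
    exact hw1 a ha
  have hdvd : ∀ a ∈ I, s * a ∈ Ideal.span {b} := by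
    intro a ha
    rw [hTspan] at ha
    induction ha using Submodule.span_induction with
    | mem x hx =>
      rw [Ideal.mem_span_singleton']
      refine ⟨(∏ a ∈ T.attach.erase ⟨x, hx⟩, (w a).1) * (w ⟨x, hx⟩).2, ?_⟩
      rw [hs, ← Finset.mul_prod_erase _ _ (Finset.mem_attach T ⟨x, hx⟩)]
      linear_combination -(∏ a ∈ T.attach.erase ⟨x, hx⟩, (w a).1) * hw2 ⟨x, hx⟩
    | zero => simp
    | add x hx y hy ihx ihy => rw [mul_add]; exact Ideal.add_mem _ ihx ihy
    | smul c x hx ihx =>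
      rw [smul_eq_mul, mul_comm c x, ← mul_assoc]
      exact Ideal.mul_mem_right c _ ihx
  refine ⟨b, hTsub hbT, ?_, s, hsp, hdvd⟩
  rintro rfl
  apply hI
  rw [hTspan, eq_bot_iff, Ideal.span_le]
  intro a haT
  obtain ⟨t, r, ht, htr⟩ := hb a haT
  have ht0 : t ≠ 0 := fun h => ht (h ▸ p.zero_mem)
  have : a = 0 := by
    have := htr
    rw [mul_zero] at this
    exact (mul_eq_zero.mp this).resolve_left ht0
  simp [this]

/-- KEY: any prime of `S` under an extended prime is itself extended. -/
lemma map_comap_eq_of_le (hR : IsPruferDomain R) (hf : IsContentAlgebra f)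
    {p : Ideal R} (hp : p.IsPrime) {Q : Ideal S} (hQ : Q.IsPrime)
    (hQp : Q ≤ Ideal.map f p) :
    Ideal.map f (Ideal.comap f Q) = Q := by
  haveI : IsDomain R := hR.1
  have hOR := hf.1
  have hff := hf.2.1
  apply le_antisymm Ideal.map_comap_le
  intro h hh
  set q := Ideal.comap f Q with hqdef
  haveI := hQ
  have hqprime : q.IsPrime := Ideal.IsPrime.comap f
  have hqp : q ≤ p := fun a ha => purity f hff (hQp ha)
  by_cases h0 : h = 0
  · rw [h0]; exact Ideal.zero_mem _
  have hcne : ORContent f h ≠ ⊥ := fun hc => h0 (eq_zero_of_orcontent_bot f hOR hc)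
  obtain ⟨T, hTsub, hTspan⟩ := orcontent_fg f hOR h
  obtain ⟨b, hbI, hb0, s, hsp, hsI⟩ := exists_local_gen hR hp hcne hTsub hTspan
  have hs0 : s ≠ 0 := fun h => hsp (h ▸ p.zero_mem)
  by_cases hbq : b ∈ q
  · -- every element of the content is in q
    have hcq : ORContent f h ≤ q := by
      intro a ha
      obtain ⟨r, hr⟩ := Ideal.mem_span_singleton'.mp (hsI a ha)
      have hmem : s * a ∈ q := by
        rw [← hr]
        exact Ideal.mul_mem_left _ r hbq
      rcases hqprime.mem_or_mem hmem with h' | h'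
      · exact absurd (hqp h') hsp
      · exact h'
    exact (orcontent_le_iff f hOR).mp hcq
  · exfalso
    have hfb : f b ∉ Q := hbq
    have hmem : f s * h ∈ Ideal.span {f b} := by
      have h1 : ORContent f (f s * h) ≤ Ideal.span {b} := by
        rw [orcontent_smul f hf hs0 h]
        rw [Ideal.span_singleton_mul_le_iff]
        exact hsI
      have h2 := (orcontent_le_iff f hOR).mp h1
      rwa [Ideal.map_span, Set.image_singleton] at h2
    obtain ⟨g, hg⟩ := Ideal.mem_span_singleton'.mp hmem
    have hgQ : g ∈ Q := by
      have : g * f b ∈ Q := by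
        rw [hg]
        exact Ideal.mul_mem_left _ _ hh
      rcases hQ.mem_or_mem this with h' | h'
      · exact h'
      · exact absurd h' hfb
    have hgc : ORContent f g ≤ p := (orcontent_le_iff f hOR).mpr (hQp hgQ)
    have hceq : Ideal.span {b} * ORContent f g = Ideal.span {s} * ORContent f h := by
      rw [← orcontent_smul f hf hb0 g, ← orcontent_smul f hf hs0 h]
      rw [show f b * g = f s * h from by rw [mul_comm]; exact hg]
    have hsb : s * b ∈ Ideal.span {b} * ORContent f g := by
      rw [hceq]
      exact Ideal.mem_span_singleton_mul.mpr ⟨b, hbI, rfl⟩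
    obtain ⟨z, hz, hbz⟩ := Ideal.mem_span_singleton_mul.mp hsb
    have hzs : z = s := by
      have hb2 : b * z = b * s := by rw [hbz]; ring
      exact mul_left_cancel₀ hb0 hb2
    exact hsp (hgc (hzs ▸ hz))


end ORAux
end ORAux
/-- In a content algebra map over a Prüfer domain, every prime `p` of
`R` extends to a prime of `S` of the same height. -/
theorem height_preserved_of_prufer {R S : Type*} [CommRing R] [CommRing S]
    (hR : IsPruferDomain R) (f : R →+* S) (hf : IsContentAlgebra f)
    (p : Ideal R) (hp : p.IsPrime) :
    ∃ hq : (p.map f).IsPrime,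
      Order.height (⟨p, hp⟩ : PrimeSpectrum R) =
        Order.height (⟨p.map f, hq⟩ : PrimeSpectrum S) := by
  haveI : IsDomain R := hR.1
  have hff := hf.2.1
  have hq : (p.map f).IsPrime := ORAux.map_isPrime f hf hp
  refine ⟨hq, le_antisymm ?_ ?_⟩
  · -- height p ≤ height (pS)
    let F : PrimeSpectrum R → PrimeSpectrum S :=
      fun x => ⟨x.asIdeal.map f, ORAux.map_isPrime f hf x.isPrime⟩
    have hF : StrictMono F := by
      intro x y hxy
      rw [lt_iff_le_and_ne]
      constructor
      · show (⟨x.asIdeal.map f, _⟩ : PrimeSpectrum S) ≤ ⟨y.asIdeal.map f, _⟩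
        rw [← PrimeSpectrum.asIdeal_le_asIdeal]
        exact Ideal.map_mono ((PrimeSpectrum.asIdeal_le_asIdeal _ _).mpr hxy.le)
      · intro he
        have h1 : x.asIdeal.map f = y.asIdeal.map f := congrArg PrimeSpectrum.asIdeal he
        have h2 : x.asIdeal = y.asIdeal := by
          have := congrArg (Ideal.comap f) h1
          rwa [ORAux.comap_map_eq f hff, ORAux.comap_map_eq f hff] at this
        exact hxy.ne (PrimeSpectrum.ext h2)
    exact Order.height_le_height_apply_of_strictMono F hF ⟨p, hp⟩
  · -- height (pS) ≤ height p
    apply Order.height_le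
    intro σ hlast
    have hle2 : ∀ i, (σ.toFun i).asIdeal ≤ Ideal.map f p := by
      intro i
      have h1 : σ.toFun i ≤ σ.last := σ.monotone (Fin.le_last i)
      rw [hlast] at h1
      exact (PrimeSpectrum.asIdeal_le_asIdeal _ _).mpr h1
    have key : ∀ i, Ideal.map f (Ideal.comap f (σ.toFun i).asIdeal) = (σ.toFun i).asIdeal :=
      fun i => ORAux.map_comap_eq_of_le hR hf hp (σ.toFun i).isPrime (hle2 i)
    let τ : LTSeries (PrimeSpectrum R) :=
      { length := σ.length
        toFun := fun i => ⟨Ideal.comap f (σ.toFun i).asIdeal,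
          Ideal.IsPrime.comap f (hK := (σ.toFun i).isPrime)⟩
        step := fun i => by
          have hlt : (σ.toFun i.castSucc).asIdeal < (σ.toFun i.succ).asIdeal :=
            (PrimeSpectrum.asIdeal_lt_asIdeal _ _).mpr (σ.step i)
          show (_ : PrimeSpectrum R) < _
          rw [← PrimeSpectrum.asIdeal_lt_asIdeal]
          refine lt_of_le_of_ne (Ideal.comap_mono hlt.le) ?_
          intro he
          have h2 := congrArg (Ideal.map f) he
          rw [key i.castSucc, key i.succ] at h2
          exact hlt.ne h2 }
    have hτlast : τ.last = ⟨p, hp⟩ := by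
      apply PrimeSpectrum.ext
      show Ideal.comap f (σ.toFun (Fin.last _)).asIdeal = p
      have : (σ.toFun (Fin.last σ.length)).asIdeal = Ideal.map f p :=
        congrArg PrimeSpectrum.asIdeal hlast
      rw [this, ORAux.comap_map_eq f hff]
    have hτ := Order.length_le_height_last (p := τ)
    rw [hτlast] at hτ
    exact hτ
end

section
/- Let V be a valuation domain with maximal ideal m, and suppose m is not a principal ideal. Then there exists a nonzero element x ∈ m such that the principal ideal xV equals the intersection of all ideals J of V with xV ⊊ J. -/
/-
If `y ∉ xV`, then `x` lies in `y𝔪`, an ideal that strictly contains `xV` because `y𝔪` is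
principal only if `𝔪` is, and that misses `y` because `y = ys` with `s ∈ 𝔪` forces `y = 0`.
So every `y` in all ideals strictly above `xV` already lies in `xV`, for any `x`.
-/

open Ideal IsLocalRing

theorem Ideal.isPrincipal_of_isPrincipal_span_singleton_mul {R : Type*} [CommRing R]
    [IsDomain R] {y : R} {I : Ideal R} (hy : y ≠ 0) (h : (span {y} * I).IsPrincipal) :
    I.IsPrincipal := by
  obtain ⟨z, hz⟩ := h
  rw [submodule_span_eq] at hz
  have hz_mem : z ∈ span {y} * I := hz ▸ mem_span_singleton_self z
  obtain ⟨c, -, rfl⟩ := mem_span_singleton_mul.mp hz_mem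
  refine ⟨c, (span_singleton_mul_right_inj hy).mp ?_⟩
  rw [hz, submodule_span_eq, span_singleton_mul_span_singleton]

theorem IsLocalRing.notMem_span_singleton_mul_maximalIdeal {R : Type*} [CommRing R]
    [IsDomain R] [IsLocalRing R] {y : R} (hy : y ≠ 0) : y ∉ span {y} * maximalIdeal R := by
  rintro hmem
  obtain ⟨s, hs, hys⟩ := mem_span_singleton_mul.mp hmem
  obtain rfl : s = 1 := (mul_eq_left₀ hy).mp hys
  exact (maximalIdeal.isMaximal R).ne_top ((eq_top_iff_one _).mpr hs)

theorem ValuationRing.mem_span_singleton_mul_maximalIdeal_of_notMem {R : Type*} [CommRing R]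
    [IsDomain R] [ValuationRing R] {x y : R} (hyx : y ∉ span {x}) :
    x ∈ span {y} * maximalIdeal R := by
  obtain hxy | ⟨c, rfl⟩ := ValuationRing.dvd_total x y
  · exact absurd (mem_span_singleton.mpr hxy) hyx
  refine mem_span_singleton_mul.mpr ⟨c, fun ⟨u, hu⟩ => hyx ?_, rfl⟩
  exact mem_span_singleton.mpr ⟨↑u⁻¹, by rw [← hu, mul_assoc, Units.mul_inv, mul_one]⟩

theorem ValuationRing.span_singleton_eq_sInf_gt {R : Type*} [CommRing R] [IsDomain R]
    [ValuationRing R] (hm : ¬ (maximalIdeal R).IsPrincipal) (x : R) :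
    span {x} = sInf {J : Ideal R | span {x} < J} := by
  refine le_antisymm (le_sInf fun J hJ => hJ.le) fun y hy => ?_
  by_contra hyx
  have hy0 : y ≠ 0 := by rintro rfl; exact hyx (zero_mem _)
  have hle : span {x} ≤ span {y} * maximalIdeal R :=
    (span_singleton_le_iff_mem _).mpr (mem_span_singleton_mul_maximalIdeal_of_notMem hyx)
  have hne : span {x} ≠ span {y} * maximalIdeal R := fun h =>
    hm (Ideal.isPrincipal_of_isPrincipal_span_singleton_mul hy0 (h ▸ ⟨x, rfl⟩))
  exact notMem_span_singleton_mul_maximalIdeal hy0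
    (mem_sInf.mp hy (lt_of_le_of_ne hle hne))

/-- In a valuation domain whose maximal ideal is not principal, there is
a nonzero `x` in the maximal ideal such that `xV` is the intersection of all ideals
strictly containing it. -/
theorem exists_principal_eq_sInf_of_not_principal {V : Type*} [CommRing V] [IsDomain V]
    [ValuationRing V] (hm : ¬ (IsLocalRing.maximalIdeal V).IsPrincipal) :
    ∃ x : V, x ≠ 0 ∧ x ∈ IsLocalRing.maximalIdeal V ∧
      Ideal.span {x} = sInf {J : Ideal V | Ideal.span {x} < J} := by
  have hm_ne_bot : maximalIdeal V ≠ ⊥ := fun h => hm (h ▸ bot_isPrincipal)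
  obtain ⟨x, hxm, hx0⟩ := Submodule.exists_mem_ne_zero_of_ne_bot hm_ne_bot
  exact ⟨x, hx0, hxm, ValuationRing.span_singleton_eq_sInf_gt hm x⟩
end

section
/- Let (V, m) and (S, n) be valuation domains (local, with maximal ideals m and n respectively), and let V → S be a faithfully flat ring homomorphism making S an Ohm-Rush V-algebra. If m is not a principal ideal, then mS = n. -/
section Aux

/-- In a valuation ring, every element of an extended ideal is divisible by the image of a
single element of the ideal. -/
lemma exists_dvd_of_mem_map {V S : Type*} [CommRing V] [IsDomain V] [ValuationRing V]
    [CommRing S] (f : V →+* S) {I : Ideal V} {s : S} (hs : s ∈ I.map f) :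
    ∃ c ∈ I, f c ∣ s := by
  rw [Ideal.map] at hs
  induction hs using Submodule.span_induction with
  | mem x h =>
      obtain ⟨c, hc, rfl⟩ := h
      exact ⟨c, hc, dvd_rfl⟩
  | zero => exact ⟨0, I.zero_mem, by simp⟩
  | add x y hx hy ihx ihy =>
      obtain ⟨c, hc, hcd⟩ := ihx
      obtain ⟨b, hb, hbd⟩ := ihy
      obtain ⟨u, hu | hu⟩ := ValuationRing.cond c b
      · exact ⟨c, hc, dvd_add hcd (dvd_trans ⟨f u, by rw [← map_mul, hu]⟩ hbd)⟩
      · exact ⟨b, hb, dvd_add (dvd_trans ⟨f u, by rw [← map_mul, hu]⟩ hcd) hbd⟩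
  | smul r x hx ih =>
      obtain ⟨c, hc, hcd⟩ := ih
      exact ⟨c, hc, (hcd.mul_left r)⟩

end Aux

/-- If `(V,m) → (S,n)` is a faithfully flat Ohm–Rush map of valuation
domains and `m` is not principal, then `mS = n`. -/
theorem maximalIdeal_map_eq_of_not_principal {V S : Type*}
    [CommRing V] [IsDomain V] [ValuationRing V]
    [CommRing S] [IsDomain S] [ValuationRing S]
    (f : V →+* S) (hff : RingHomFaithfullyFlat f) (hor : IsOhmRushAlgebra f)
    (hm : ¬ (IsLocalRing.maximalIdeal V).IsPrincipal) :
    (IsLocalRing.maximalIdeal V).map f = IsLocalRing.maximalIdeal S := by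
  classical
  letI := f.toAlgebra
  haveI hFF : Module.FaithfullyFlat V S := hff
  have halg : algebraMap V S = f := rfl
  -- injectivity of f
  have hinj : ∀ a : V, f a = 0 → a = 0 := by
    intro a ha
    by_contra h0
    have hz : LinearMap.lTensor S (LinearMap.lsmul V V a) = 0 := by
      apply TensorProduct.ext'
      intro s r
      simp only [LinearMap.lTensor_tmul, LinearMap.lsmul_apply, LinearMap.zero_apply]
      rw [TensorProduct.tmul_smul, TensorProduct.smul_tmul', Algebra.smul_def, halg, ha,
        zero_mul, TensorProduct.zero_tmul]
    have h00 : LinearMap.lsmul V V a = 0 :=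
      (Module.FaithfullyFlat.zero_iff_lTensor_zero V S _).mpr hz
    have : a = 0 := by simpa using congrArg (fun g => g 1) h00
    exact h0 this
  set m := IsLocalRing.maximalIdeal V with hmdef
  set n := IsLocalRing.maximalIdeal S with hndef
  -- mS is proper
  have hmS_ne_top : m.map f ≠ ⊤ := by
    intro htop
    have h1 := ((Module.FaithfullyFlat.iff_flat_and_proper_ideal V S).mp hFF).2 m
      (Ideal.IsMaximal.ne_top (IsLocalRing.maximalIdeal.isMaximal V))
    apply h1
    rw [Ideal.smul_top_eq_map, halg, htop]
    rfl
  have hmn : m.map f ≤ n := IsLocalRing.le_maximalIdeal hmS_ne_top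
  by_contra hne
  obtain ⟨t, htn, ht⟩ : ∃ t ∈ n, t ∉ m.map f := SetLike.exists_of_lt (lt_of_le_of_ne hmn hne)
  have htu : ¬ IsUnit t := htn
  -- content bound: if f e ∣ s then c(s) ≤ (e)
  have hC : ∀ (s : S) (e : V), f e ∣ s → ORContent f s ≤ Ideal.span {e} := by
    intro s e he
    apply sInf_le
    show s ∈ Ideal.map f (Ideal.span {e})
    rw [Ideal.map_span, Set.image_singleton, Ideal.mem_span_singleton]
    exact he
  -- key step (A): t divides f e for every e in m
  have hA : ∀ e ∈ m, t ∣ f e := by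
    intro e he
    obtain ⟨c, hc | hc⟩ := ValuationRing.cond (f e) t
    · exfalso
      apply ht
      have h1 : ORContent f t ≤ Ideal.span {e} := hC t e ⟨c, hc.symm⟩
      have h2 : Ideal.span {e} ≤ m := (Ideal.span_le).mpr (by simpa using he)
      exact Ideal.map_mono (h1.trans h2) (hor t)
    · exact ⟨c, hc.symm⟩
  -- pick a nonzero element of m
  have hmne : m ≠ ⊥ := by
    intro hbot
    exact hm (hbot ▸ ⟨⟨0, (Submodule.span_zero_singleton V).symm⟩⟩)
  obtain ⟨a, ham, ha0⟩ := (Submodule.ne_bot_iff m).mp hmne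
  obtain ⟨s, hts⟩ : t ∣ f a := hA a ham
  have hs0 : s ≠ 0 := by
    rintro rfl
    exact ha0 (hinj a (by simpa using hts))
  have ht0 : t ≠ 0 := by
    rintro rfl
    exact ht (by simp [Ideal.zero_mem])
  -- content of s and a generator-like element d
  obtain ⟨d, hdC, hds⟩ := exists_dvd_of_mem_map f (hor s)
  have hd0 : d ≠ 0 := by
    rintro rfl
    rw [map_zero, zero_dvd_iff] at hds
    exact hs0 hds
  obtain ⟨y, hy⟩ := hds
  -- compare a and d
  obtain ⟨e, he | he⟩ := ValuationRing.cond a d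
  · -- a * e = d : then s = f a * f e * y = t * s * f e * y, so t is a unit
    exfalso
    have : s * 1 = s * (t * f e * y) := by
      calc s * 1 = s := by ring
      _ = f d * y := hy
      _ = f a * f e * y := by rw [← he, map_mul]
      _ = t * s * f e * y := by rw [hts]
      _ = s * (t * f e * y) := by ring
    have h1 : (1 : S) = t * f e * y := by
      exact mul_left_cancel₀ hs0 this
    exact htu (IsUnit.of_mul_eq_one (a := t) (f e * y) (by rw [← mul_assoc, ← h1]))
  · -- d * e = a
    have hfd0 : f d ≠ 0 := fun h => hd0 (hinj d h)
    have heu : ¬ IsUnit e := by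
      intro hu
      -- f d * f e = t * s = t * f d * y  ⇒ f e = t * y  ⇒ t is a unit
      have h1 : f d * f e = f d * (t * y) := by
        calc f d * f e = f a := by rw [← he, map_mul]
        _ = t * s := hts
        _ = t * (f d * y) := by rw [hy]
        _ = f d * (t * y) := by ring
      have h2 : f e = t * y := mul_left_cancel₀ hfd0 h1
      exact htu (isUnit_of_mul_isUnit_left (h2 ▸ hu.map f))
    have hem : e ∈ m := heu
    have he0 : e ≠ 0 := by
      rintro rfl
      exact ha0 (by rw [← he, mul_zero])
    -- m is not principal : find b ∈ m not divisible by e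
    obtain ⟨b, hbm, hbe⟩ : ∃ b ∈ m, ¬ e ∣ b := by
      by_contra hall
      push_neg at hall
      apply hm
      refine ⟨⟨e, le_antisymm ?_ ?_⟩⟩
      · intro x hx
        exact (Ideal.mem_span_singleton).mpr (hall x hx)
      · exact (Ideal.span_singleton_le_iff_mem m).mpr hem
    obtain ⟨w, hw | hw⟩ := ValuationRing.cond e b
    · exact absurd ⟨w, hw.symm⟩ hbe
    -- b * w = e
    have hwu : ¬ IsUnit w := by
      intro hu
      obtain ⟨v, hv⟩ := hu.exists_right_inv
      exact hbe ⟨v, by rw [← hw, mul_assoc, hv, mul_one]⟩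
    have hwm : w ∈ m := hwu
    obtain ⟨z, hz⟩ := hA w hwm
    -- s = f (d * b) * z
    have hsdb : f (d * b) ∣ s := by
      refine ⟨z, ?_⟩
      have h1 : t * s = t * (f (d * b) * z) := by
        calc t * s = f a := hts.symm
        _ = f d * f e := by rw [← he, map_mul]
        _ = f d * (f b * f w) := by rw [← hw, map_mul]
        _ = f d * (f b * (t * z)) := by rw [hz]
        _ = t * (f (d * b) * z) := by rw [map_mul]; ring
      exact mul_left_cancel₀ ht0 h1
    -- minimality of content: d ∈ c(s) ≤ (d*b), so d*b ∣ d, so b is a unit — contradiction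
    have hdmem : d ∈ Ideal.span {d * b} := hC s (d * b) hsdb hdC
    obtain ⟨q, hq⟩ := Ideal.mem_span_singleton.mp hdmem
    have hdd : d * (b * q) = d * 1 := by
      rw [mul_one, ← mul_assoc, ← hq]
    have hbq : b * q = 1 := mul_left_cancel₀ hd0 hdd
    exact (hbm : ¬ IsUnit b) (IsUnit.of_mul_eq_one (a := b) q hbq)
end

section
/- Let R → S be a faithfully flat homomorphism of commutative rings. If S is a valuation domain, then R is a valuation domain; and if S is a Prüfer domain, then R is a Prüfer domain. -/
open Ideal

def ColonsComaximal (A : Type*) [CommRing A] : Prop :=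
  ∀ a b : A, (span {a}).colon {b} ⊔ (span {b}).colon {a} = ⊤

theorem isValuationDomain_iff {A : Type*} [CommRing A] :
    IsValuationDomain A ↔ IsDomain A ∧ ∀ a b : A, a ∣ b ∨ b ∣ a := by
  refine and_congr_right fun _ => forall₂_congr fun a b => ?_
  simp only [Dvd.dvd, exists_or, eq_comm]

section Localization

variable {R S : Type*} [CommRing R] [CommRing S] [Algebra R S] (M : Submonoid R)
  [IsLocalization M S]

theorem IsLocalization.algebraMap_dvd_algebraMap_iff (a b : R) :
    algebraMap R S a ∣ algebraMap R S b ↔ ∃ m ∈ M, m * b ∈ span {a} := by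
  rw [← mem_span_singleton, ← Set.image_singleton, ← map_span,
    algebraMap_mem_map_algebraMap_iff M]

include M in
theorem IsLocalization.dvd_total_of_dvd_total_algebraMap
    (h : ∀ a b : R, algebraMap R S a ∣ algebraMap R S b ∨ algebraMap R S b ∣ algebraMap R S a)
    (x y : S) : x ∣ y ∨ y ∣ x := by
  obtain ⟨⟨a, m⟩, hx⟩ := surj M x
  obtain ⟨⟨b, n⟩, hy⟩ := surj M y
  have hm := map_units S m
  have hn := map_units S n
  rcases h a b with hab | hba
  · left
    rw [← hx, ← hy] at hab
    exact (hn.dvd_mul_right).mp ((dvd_mul_right x _).trans hab)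
  · right
    rw [← hx, ← hy] at hba
    exact (hm.dvd_mul_right).mp ((dvd_mul_right y _).trans hba)

end Localization

theorem not_colon_sup_colon_le_of_isValuationDomain {A : Type*} [CommRing A] (M : Ideal A)
    [M.IsPrime] (h : IsValuationDomain (Localization.AtPrime M)) (a b : A) :
    ¬ (span {a}).colon {b} ⊔ (span {b}).colon {a} ≤ M := by
  intro hle
  have hdvd := ((isValuationDomain_iff.mp h).2 (algebraMap A _ a) (algebraMap A _ b)).imp
    (IsLocalization.algebraMap_dvd_algebraMap_iff M.primeCompl a b).mp
    (IsLocalization.algebraMap_dvd_algebraMap_iff M.primeCompl b a).mp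
  rcases hdvd with ⟨m, hm, hmb⟩ | ⟨m, hm, hma⟩
  · exact hm (hle (le_sup_left (a := (span {a}).colon {b})
      (Submodule.mem_colon_singleton.mpr hmb)))
  · exact hm (hle (le_sup_right (a := (span {a}).colon {b})
      (Submodule.mem_colon_singleton.mpr hma)))

theorem colonsComaximal_of_isPruferDomain {A : Type*} [CommRing A] (h : IsPruferDomain A) :
    ColonsComaximal A := by
  intro a b
  by_contra hne
  obtain ⟨M, hM, hle⟩ := exists_le_maximal _ hne
  exact not_colon_sup_colon_le_of_isValuationDomain M (h.2 M hM) a b hle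

theorem isValuationDomain_localization_of_colonsComaximal {A : Type*} [CommRing A] [IsDomain A]
    (h : ColonsComaximal A) (P : Ideal A) [P.IsPrime] :
    IsValuationDomain (Localization.AtPrime P) := by
  have : IsDomain (Localization.AtPrime P) :=
    IsLocalization.isDomain_localization P.primeCompl_le_nonZeroDivisors
  refine isValuationDomain_iff.mpr ⟨this, ?_⟩
  refine IsLocalization.dvd_total_of_dvd_total_algebraMap P.primeCompl fun a b => ?_
  simp only [IsLocalization.algebraMap_dvd_algebraMap_iff P.primeCompl]
  have hone : (1 : A) ∈ (span {a}).colon {b} ⊔ (span {b}).colon {a} := by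
    rw [h a b]
    exact Submodule.mem_top
  obtain ⟨t₁, ht₁, t₂, ht₂, hsum⟩ := Submodule.mem_sup.mp hone
  by_cases hP : t₁ ∈ P
  · have ht₂P : t₂ ∉ P := fun ht₂P => P.one_notMem (hsum ▸ P.add_mem hP ht₂P)
    exact Or.inr ⟨t₂, ht₂P, Submodule.mem_colon_singleton.mp ht₂⟩
  · exact Or.inl ⟨t₁, hP, Submodule.mem_colon_singleton.mp ht₁⟩

section FlatBaseChange

variable {R S : Type*} [CommRing R] [CommRing S] [Algebra R S]

theorem Ideal.colon_span_singleton_algebraMap_le_map [Module.Flat R S] (a b : R) :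
    (span {algebraMap R S a}).colon {algebraMap R S b} ≤
      ((span {a}).colon {b}).map (algebraMap R S) := by
  intro s hs
  obtain ⟨c, hc⟩ := mem_span_singleton'.mp (Submodule.mem_colon_singleton.mp hs)
  rw [smul_eq_mul] at hc
  -- Equational criterion: the relation `b • s - a • c = 0` in `S` is a combination of relations
  -- over `R`, whose first coordinates lie in `(a) : b`.
  obtain ⟨k, m, y, hy, hm⟩ := Module.Flat.isTrivialRelation_of_sum_smul_eq_zero
    (f := ![b, -a]) (x := ![s, c]) (by
      simp only [Fin.sum_univ_two, Matrix.cons_val_zero, Matrix.cons_val_one, Algebra.smul_def,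
        map_neg]
      linear_combination -hc)
  have hs : s = ∑ j, algebraMap R S (m 0 j) * y j := by
    simpa [Algebra.smul_def] using hy 0
  rw [hs]
  refine Ideal.sum_mem _ fun j _ => mul_mem_right _ _ (mem_map_of_mem _ ?_)
  have hj : b * m 0 j = a * m 1 j := by
    simpa [Fin.sum_univ_two, neg_mul, add_neg_eq_zero] using hm j
  rw [Submodule.mem_colon_singleton, smul_eq_mul, mul_comm, hj]
  exact mem_span_singleton_self a |> mul_mem_right _ _

end FlatBaseChange

section FaithfullyFlatDescent

variable {R S : Type*} [CommRing R] [CommRing S] [Algebra R S] [Module.FaithfullyFlat R S]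

theorem dvd_of_algebraMap_dvd_of_faithfullyFlat {a b : R}
    (h : algebraMap R S a ∣ algebraMap R S b) : a ∣ b := by
  rw [← mem_span_singleton, ← (span {a}).comap_map_eq_self_of_faithfullyFlat (B := S), mem_comap,
    map_span, Set.image_singleton, mem_span_singleton]
  exact h

variable (S) in
theorem isDomain_of_faithfullyFlat [IsDomain S] : IsDomain R :=
  (FaithfulSMul.algebraMap_injective R S).isDomain

variable (S) in
theorem isValuationDomain_of_faithfullyFlat (h : IsValuationDomain S) : IsValuationDomain R := by
  rw [isValuationDomain_iff] at h ⊢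
  obtain ⟨_, hdvd⟩ := h
  exact ⟨isDomain_of_faithfullyFlat S, fun a b => (hdvd (algebraMap R S a) (algebraMap R S b)).imp
    dvd_of_algebraMap_dvd_of_faithfullyFlat dvd_of_algebraMap_dvd_of_faithfullyFlat⟩

variable (S) in
theorem colonsComaximal_of_faithfullyFlat (h : ColonsComaximal S) : ColonsComaximal R := by
  intro a b
  apply map_injective_of_faithfullyFlat (B := S)
  rw [Ideal.map_sup, Ideal.map_top, eq_top_iff, ← h (algebraMap R S a) (algebraMap R S b)]
  exact sup_le_sup (colon_span_singleton_algebraMap_le_map a b)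
    (colon_span_singleton_algebraMap_le_map b a)

variable (S) in
theorem isPruferDomain_of_faithfullyFlat (h : IsPruferDomain S) : IsPruferDomain R :=
  have := h.1
  have := isDomain_of_faithfullyFlat (R := R) S
  ⟨this, fun P _ => isValuationDomain_localization_of_colonsComaximal
    (colonsComaximal_of_faithfullyFlat S (colonsComaximal_of_isPruferDomain h)) P⟩

end FaithfullyFlatDescent

/-- Faithfully flat descent: if `R → S` is faithfully flat and `S` is a
valuation domain (resp. a Prüfer domain), then so is `R`. -/
theorem valuation_and_prufer_descend_of_faithfullyFlat {R S : Type*}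
    [CommRing R] [CommRing S] (f : R →+* S) (hff : RingHomFaithfullyFlat f) :
    (IsValuationDomain S → IsValuationDomain R) ∧
    (IsPruferDomain S → IsPruferDomain R) := by
  let _ := f.toAlgebra
  have : Module.FaithfullyFlat R S := hff
  exact ⟨isValuationDomain_of_faithfullyFlat S, isPruferDomain_of_faithfullyFlat S⟩
end

section
/- Let R → S be a ring homomorphism making S a content R-algebra, where S is a Prüfer domain and R is not a field. Then for every maximal ideal m of R, the extension mS is a maximal ideal of S. -/
open scoped TensorProduct



lemma ffInjective {R S : Type*} [CommRing R] [CommRing S] (f : R →+* S)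
    (hFF : RingHomFaithfullyFlat f) : Function.Injective f := by
  letI := f.toAlgebra
  haveI ff : Module.FaithfullyFlat R S := hFF
  rw [injective_iff_map_eq_zero]
  intro r hr
  by_contra hr0
  set N := Submodule.span R {r} with hN
  have hni : Function.Injective (LinearMap.rTensor S N.subtype) :=
    Module.Flat.rTensor_preserves_injective_linearMap _ N.injective_subtype
  have hzero : ∀ z : (N ⊗[R] S), LinearMap.rTensor S N.subtype z = 0 := by
    intro z
    induction z using TensorProduct.induction_on with
    | zero => simp
    | tmul n s =>
      obtain ⟨d, hd⟩ := Submodule.mem_span_singleton.mp n.2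
      have h2 : ((n : R)) • s = 0 := by
        rw [Algebra.smul_def]
        have : algebraMap R S ((n:R)) = f ((n:R)) := rfl
        rw [this, ← hd, smul_eq_mul, map_mul, hr, mul_zero, zero_mul]
      rw [LinearMap.rTensor_tmul]
      have h1 : ((n : R) : R) ⊗ₜ[R] s = (1:R) ⊗ₜ[R] (((n:R)) • s) := by
        rw [← TensorProduct.smul_tmul, smul_eq_mul, mul_one]
      simp only [Submodule.subtype_apply]
      rw [h1, h2, TensorProduct.tmul_zero]
    | add a b ha hb => rw [map_add, ha, hb, add_zero]
  haveI : Subsingleton (N ⊗[R] S) := ⟨fun z z' => hni (by rw [hzero z, hzero z'])⟩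
  have : Subsingleton N := Module.FaithfullyFlat.rTensor_reflects_triviality R S N
  have : (⟨r, Submodule.mem_span_singleton_self r⟩ : N) = 0 := Subsingleton.elim _ _
  exact hr0 (congrArg Subtype.val this)

/-- If `R → S` is a content algebra map with `S` a Prüfer domain and `R`
not a field, then maximal ideals of `R` extend to maximal ideals of `S`. -/
theorem maximal_extends_to_maximal {R S : Type*} [CommRing R] [CommRing S]
    (hS : IsPruferDomain S) (hR : ¬ IsField R)
    (f : R →+* S) (hf : IsContentAlgebra f)
    (m : Ideal R) (hm : m.IsMaximal) :
    (m.map f).IsMaximal := by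
  obtain ⟨hOR, hFF, hDM⟩ := hf
  obtain ⟨hSdom, hSval⟩ := hS
  haveI := hSdom
  have hinj : Function.Injective f := ffInjective f hFF
  -- basic content facts
  have hle : ∀ (s : S) (I : Ideal R), s ∈ Ideal.map f I → ORContent f s ≤ I :=
    fun s I h => sInf_le h
  have hmem : ∀ (s : S) (I : Ideal R), ORContent f s ≤ I → s ∈ Ideal.map f I :=
    fun s I h => Ideal.map_mono h (hOR s)
  -- properness of the extension
  have hne : Ideal.map f m ≠ ⊤ := by
    intro h
    letI := f.toAlgebra
    haveI ff : Module.FaithfullyFlat R S := hFF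
    refine Module.FaithfullyFlat.submodule_ne_top (M := S) hm ?_
    rw [Ideal.smul_top_eq_map]
    have : algebraMap R S = f := rfl
    rw [this, h]
    rfl
  haveI : Nontrivial R := ⟨⟨0, 1, fun h => hm.ne_top (by
    rw [Ideal.eq_top_iff_one, ← h]; exact m.zero_mem)⟩⟩
  -- m is nonzero
  have hmbot : m ≠ ⊥ := by
    intro h
    obtain ⟨I, hI1, hI2⟩ := Ring.not_isField_iff_exists_ideal_bot_lt_and_lt_top.mp hR
    have hmI : m = I := hm.eq_of_le hI2.ne (by rw [h]; exact hI1.le)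
    rw [h] at hmI
    exact hI1.ne hmI
  obtain ⟨x, hxm, hx0⟩ := Submodule.exists_mem_ne_zero_of_ne_bot hmbot
  have hfx0 : f x ≠ 0 := fun h => hx0 (hinj (by rw [h, map_zero]))
  -- the key claim
  have key : ∀ Q : Ideal S, Q.IsMaximal → Ideal.map f m ≤ Q → Q ≤ Ideal.map f m := by
    intro Q hQmax hmQ
    haveI hQp : Q.IsPrime := hQmax.isPrime
    have hcomap : Ideal.comap f Q = m := by
      have hcQp : (Ideal.comap f Q).IsPrime := Ideal.IsPrime.comap f
      exact (hm.eq_of_le hcQp.ne_top (fun r hr => hmQ (Ideal.mem_map_of_mem f hr))).symm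
    intro q hq
    by_contra hqm
    have hcq : ¬ ORContent f q ≤ m := fun h => hqm (hmem q m h)
    obtain ⟨a, haq, ham⟩ := SetLike.not_le_iff_exists.mp hcq
    obtain ⟨hVdom, hVtot⟩ := hSval Q hQmax
    -- localization equation helper
    have hloc : ∀ (p₁ p₂ : S) (c : Localization.AtPrime Q),
        algebraMap S (Localization.AtPrime Q) p₁ * c = algebraMap S (Localization.AtPrime Q) p₂ →
        ∃ s w : S, w ∉ Q ∧ p₁ * s = p₂ * w := by
      intro p₁ p₂ c hc
      obtain ⟨⟨s, w⟩, hsw⟩ := IsLocalization.mk'_surjective Q.primeCompl c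
      dsimp only at hsw
      refine ⟨s, w, w.2, ?_⟩
      have h1 : algebraMap S (Localization.AtPrime Q) (p₁ * s)
          = algebraMap S (Localization.AtPrime Q) (p₂ * (w : S)) := by
        rw [map_mul, map_mul, ← IsLocalization.mk'_spec (Localization.AtPrime Q) s w, hsw,
          ← hc]
        ring
      obtain ⟨u, hu⟩ := (IsLocalization.eq_iff_exists Q.primeCompl _).mp h1
      have hu0 : (u : S) ≠ 0 := fun h => u.2 (h ▸ Q.zero_mem)
      exact mul_left_cancel₀ hu0 hu
    obtain ⟨c, hc⟩ := hVtot (algebraMap S (Localization.AtPrime Q) q)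
      (algebraMap S (Localization.AtPrime Q) (f x))
    rcases hc with hc | hc
    · -- Case 1 : q * s = f x * w with w ∉ Q
      obtain ⟨s, w, hw, hqs⟩ := hloc q (f x) c hc
      obtain ⟨n, hn, hDMe⟩ := hDM q s
      have hqsx : ORContent f (q * s) ≤ Ideal.span {x} := by
        refine hle _ _ ?_
        rw [hqs, Ideal.map_span, Set.image_singleton]
        exact Ideal.mem_span_singleton.mpr ⟨w, rfl⟩
      have hprod : ORContent f q ^ n * ORContent f s ≤ Ideal.span {x} := by
        rw [hDMe]; exact Ideal.mul_le_right.trans hqsx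
      -- get t with f(a^n) * s = f x * t
      have hsp : Ideal.span {a ^ n} * ORContent f s ≤ Ideal.span {x} := by
        refine Ideal.mul_le.mpr fun r hr y hy => ?_
        obtain ⟨d, hd⟩ := Ideal.mem_span_singleton.mp hr
        rw [hd, mul_comm (a ^ n) d, mul_assoc]
        exact Ideal.mul_mem_left _ d (hprod (Ideal.mul_mem_mul (Ideal.pow_mem_pow haq n) hy))
      have hfs : f (a ^ n) * s ∈ Ideal.map f (Ideal.span {x}) := by
        have h1 : f (a ^ n) * s ∈ Ideal.map f (Ideal.span {a ^ n}) * Ideal.map f (ORContent f s) :=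
          Ideal.mul_mem_mul (Ideal.mem_map_of_mem f (Ideal.mem_span_singleton_self _)) (hOR s)
        rw [← Ideal.map_mul] at h1
        exact Ideal.map_mono hsp h1
      rw [Ideal.map_span, Set.image_singleton] at hfs
      obtain ⟨t, ht⟩ := Ideal.mem_span_singleton.mp hfs
      -- cancel f x
      have hcan : f x * (q * t) = f x * (f (a ^ n) * w) := by
        calc f x * (q * t) = q * (f x * t) := by ring
        _ = q * (f (a ^ n) * s) := by rw [← ht]
        _ = f (a ^ n) * (q * s) := by ring
        _ = f (a ^ n) * (f x * w) := by rw [hqs]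
        _ = f x * (f (a ^ n) * w) := by ring
      have hqt : q * t = f (a ^ n) * w := mul_left_cancel₀ hfx0 hcan
      have hQin : f (a ^ n) * w ∈ Q := hqt ▸ Ideal.mul_mem_right t Q hq
      rcases hQp.mem_or_mem hQin with h | h
      · exact ham (hm.isPrime.mem_of_pow_mem n (hcomap ▸ Ideal.mem_comap.mpr h))
      · exact hw h
    · -- Case 2 : f x * s = q * w with w ∉ Q
      obtain ⟨s, w, hw, hxs⟩ := hloc (f x) q c hc
      obtain ⟨n, hn, hDMe⟩ := hDM w q
      have hwq : ORContent f (w * q) ≤ m := by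
        refine hle _ _ ?_
        rw [mul_comm, ← hxs]
        exact Ideal.mul_mem_right s _ (Ideal.mem_map_of_mem f hxm)
      have hcw : ¬ ORContent f w ≤ m := by
        intro h
        exact hw (hmQ (hmem w m h))
      obtain ⟨b, hbw, hbm⟩ := SetLike.not_le_iff_exists.mp hcw
      have hstep : ORContent f w ^ n * ORContent f q ≤ m := by
        rw [hDMe]
        exact Ideal.mul_le_right.trans hwq
      have hcqm : ORContent f q ≤ m := by
        intro y hy
        have hmem' : b ^ n * y ∈ m :=
          hstep (Ideal.mul_mem_mul (Ideal.pow_mem_pow hbw n) hy)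
        rcases hm.isPrime.mem_or_mem hmem' with h | h
        · exact absurd (hm.isPrime.mem_of_pow_mem n h) hbm
        · exact h
      exact hqm (hmem q m hcqm)
  -- conclude maximality
  refine ⟨⟨hne, fun J hJ => ?_⟩⟩
  by_contra hJtop
  obtain ⟨Q, hQmax, hJQ⟩ := Ideal.exists_le_maximal J hJtop
  exact hJ.2 (hJQ.trans (key Q hQmax (hJ.1.trans hJQ)))
end
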